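/- arXiv:1601.04220 — 4 statements merged into one kernel-verified Lean document; each statement's English description precedes it below -/
import Mathlib

section
/- Let N be a gammoid and let F be an infinite field. Then N is representable over F. -/
/-!
Common definitions: digraphs, linkings, gammoids, minors, isomorphism.
-/

universe u v

open Set

/-- `X` is linked to `T` in the digraph on vertex type `V` with arc relation `A`:
there is a family of pairwise vertex-disjoint directed paths, one starting at each
vertex of `X`, each ending at a vertex of `T`. A path may be a single vertex. -/
def Linked {V : Type*} (A : V → V → Prop) (T X : Set V) : Prop :=
  ∃ P : V → List V,
    (∀ x ∈ X, (P x).head? = some x ∧ (P x).Nodup ∧ (P x).Chain' A ∧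
      ∃ t ∈ T, (P x).getLast? = some t) ∧
    ∀ x ∈ X, ∀ y ∈ X, x ≠ y → ∀ v, v ∈ (P x) → v ∉ (P y)

/-- `M` is the matroid `L(G,S,T)`: its ground set is `S`, and its independent sets
are exactly the subsets of `S` that are linked to `T`. -/
def IsLinkMatroid {V : Type*} (A : V → V → Prop) (S T : Set V) (M : Matroid V) : Prop :=
  M.E = S ∧ ∀ I : Set V, M.Indep I ↔ I ⊆ S ∧ Linked A T I

/-- A matroid is a gammoid if it is (isomorphic to) a matroid of the form `L(G,S,T)`:
there are a digraph on a vertex type `V`, a target set `T ⊆ V`, and an injection `e`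
of the ground set into `V` (whose image plays the role of `S`), such that a set is
independent if and only if its image is linked to `T`. -/
def IsGammoid {α : Type u} (M : Matroid α) : Prop :=
  ∃ (V : Type u) (A : V → V → Prop) (T : Set V) (e : α → V),
    Set.InjOn e M.E ∧ ∀ I, I ⊆ M.E → (M.Indep I ↔ Linked A T (e '' I))

/-- Deletion of a set from a matroid. -/
def Matroid.del {α : Type*} (M : Matroid α) (D : Set α) : Matroid α := M.restrict (M.E \ D)

/-- Contraction of a set from a matroid, defined by duality. -/
def Matroid.con {α : Type*} (M : Matroid α) (C : Set α) : Matroid α := (M✶.del C)✶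

/-- One step of taking a minor: a single deletion or a single contraction. -/
def MinorStep {α : Type*} (N M : Matroid α) : Prop :=
  (∃ D, N = M.del D) ∨ (∃ C, N = M.con C)

/-- `N` is a minor of `M` if it is obtained from `M` by a sequence of deletions
and contractions. -/
def IsMinor {α : Type*} (N M : Matroid α) : Prop :=
  Relation.ReflTransGen MinorStep N M

/-- Isomorphism of matroids: a bijection between the ground sets under which
independence is preserved and reflected. -/
def MatroidIso {α : Type u} {β : Type v} (M : Matroid α) (N : Matroid β) : Prop :=
  ∃ e : α → β, Set.BijOn e M.E N.E ∧ ∀ I, I ⊆ M.E → (M.Indep I ↔ N.Indep (e '' I))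

/-- An excluded minor for the class of gammoids: a matroid that is not a gammoid,
every proper minor of which is a gammoid. -/
def IsExcludedMinor {α : Type u} (M : Matroid α) : Prop :=
  ¬ IsGammoid M ∧ ∀ N : Matroid α, IsMinor N M → N ≠ M → IsGammoid N

/-- A circuit: a minimal dependent set. -/
def IsCircuit {α : Type*} (M : Matroid α) (C : Set α) : Prop :=
  C ⊆ M.E ∧ ¬ M.Indep C ∧ ∀ C' : Set α, C' ⊂ C → M.Indep C'

/-- A coloop: an element contained in every base. -/
def IsColoop {α : Type*} (M : Matroid α) (x : α) : Prop :=
  x ∈ M.E ∧ ∀ B, M.IsBase B → x ∈ B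

/-- `M` is representable over the field `F`: there is a map from the ground set to
a vector space over `F` under which a set is independent in `M` if and only if its
image is linearly independent (injectivity on independent sets being part of
linear independence of the indexed family). -/
def RepresentableOver (F : Type v) [Field F] {α : Type u} (M : Matroid α) : Prop :=
  ∃ (ι : Type (max u v)) (φ : α → (ι → F)),
    ∀ I, I ⊆ M.E → (M.Indep I ↔ LinearIndependent F (fun x : I => φ (x : α)))

/-!
In a finite digraph, `X` is linked to `T` if and only if the vertices outside `T` can be matched
injectively into the complement of `X`, each to itself or to one of its out-neighbours (Ingleton and
Piff): along a linkage every path vertex moves one step forward, and conversely the paths are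
recovered by following the matching from `X` until `T` is reached.

Now take a matrix `B` with rows `V \ T` and columns `V`, supported on this bipartite graph and
generic: over an infinite field the finitely many square submatrices given by the relevant
matchings can be made nonsingular at once, since each of their determinants is a nonzero
polynomial in the entries. The unit vectors `e x`, `x ∈ X`, are linearly independent modulo the
row space of `B` exactly when the columns outside `X` contain a nonsingular submatrix with one
column per row. A matching avoiding `X` provides one by genericity, and conversely the Leibniz
expansion of its determinant provides a matching. Finally, a finite gammoid involves only finitely
many vertices of its digraph.
-/

open Function Matrix

namespace List

variable {α : Type*} {l : List α} {u v w : α}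

theorem exists_pair_infix_of_mem (hu : u ∈ l) (hne : l.getLast? ≠ some u) :
    ∃ v, [u, v] <:+: l := by
  classical
  exact ⟨_, nextOr_infix_of_mem_dropLast (mem_dropLast_of_mem_of_ne_getLast? hu hne.symm) u⟩

theorem Nodup.left_eq_of_pair_infix (hl : l.Nodup) (h₁ : [u, v] <:+: l) (h₂ : [w, v] <:+: l) :
    u = w := by
  obtain ⟨i, -, hi⟩ := infix_iff_getElem?.1 h₁
  obtain ⟨j, -, hj⟩ := infix_iff_getElem?.1 h₂
  have hu := hi 0 (by simp)
  have hw := hj 0 (by simp)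
  have hvi := hi 1 (by simp)
  have hvj := hj 1 (by simp)
  grind [Nodup.getElem_inj_iff, getElem?_eq_some_iff]

theorem Nodup.not_pair_infix_of_head?_eq (hl : l.Nodup) (hv : l.head? = some v) :
    ¬ [w, v] <:+: l := fun h => by
  obtain ⟨i, -, hi⟩ := infix_iff_getElem?.1 h
  have hvi := hi 1 (by simp)
  grind [Nodup.getElem_inj_iff, getElem?_eq_some_iff, head?_eq_getElem?]

end List

section Iterate

variable {V : Type*} {f : V → V} {S X : Set V}

theorem eq_and_eq_of_iterate_eq (hinj : InjOn f S) (hmaps : MapsTo f S Xᶜ) {x y : V}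
    (hx : x ∈ X) (hy : y ∈ X) {i j : ℕ} (hi : ∀ k < i, f^[k] x ∈ S) (hj : ∀ k < j, f^[k] y ∈ S)
    (h : f^[i] x = f^[j] y) : x = y ∧ i = j := by
  induction i generalizing j with
  | zero =>
    cases j with
    | zero => exact ⟨h, rfl⟩
    | succ j =>
      rw [iterate_succ_apply'] at h
      exact absurd (h ▸ hx) (hmaps (hj j j.lt_add_one))
  | succ i ih =>
    cases j with
    | zero =>
      rw [iterate_succ_apply'] at h
      exact absurd (h ▸ hy) (hmaps (hi i i.lt_add_one))
    | succ j =>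
      rw [iterate_succ_apply', iterate_succ_apply'] at h
      obtain ⟨rfl, rfl⟩ := ih (fun k hk => hi k (hk.trans i.lt_add_one))
        (fun k hk => hj k (hk.trans j.lt_add_one)) (hinj (hi i i.lt_add_one) (hj j j.lt_add_one) h)
      exact ⟨rfl, rfl⟩

theorem exists_first_iterate_notMem [Finite V] (hinj : InjOn f S) (hmaps : MapsTo f S Xᶜ)
    {x : V} (hx : x ∈ X) : ∃ n, f^[n] x ∉ S ∧ ∀ k < n, f^[k] x ∈ S := by
  classical
  have hex : ∃ n, f^[n] x ∉ S := by
    by_contra! hS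
    exact not_injective_infinite_finite (fun n => f^[n] x) fun i j h =>
      (eq_and_eq_of_iterate_eq hinj hmaps hx hx (fun k _ => hS k) (fun k _ => hS k) h).2
  exact ⟨Nat.find hex, Nat.find_spec hex, fun k hk => not_not.1 (Nat.find_min hex hk)⟩

end Iterate

section Linkage

variable {V : Type*} {A : V → V → Prop} {T X : Set V}

def IsLinkage (A : V → V → Prop) (T X : Set V) (P : V → List V) : Prop :=
  (∀ x ∈ X, (P x).head? = some x ∧ (P x).Nodup ∧ (P x).IsChain A ∧
      ∃ t ∈ T, (P x).getLast? = some t) ∧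
    ∀ x ∈ X, ∀ y ∈ X, x ≠ y → ∀ v, v ∈ (P x) → v ∉ (P y)

namespace IsLinkage

variable {P : V → List V} {u v w x y : V}

theorem mem_self (hP : IsLinkage A T X P) (hx : x ∈ X) : x ∈ P x :=
  List.mem_of_mem_head? (hP.1 x hx).1

theorem eq_of_mem_of_mem (hP : IsLinkage A T X P) (hx : x ∈ X) (hy : y ∈ X) (hvx : v ∈ P x)
    (hvy : v ∈ P y) : x = y :=
  by_contra fun hxy => hP.2 x hx y hy hxy v hvx hvy

theorem exists_pair_infix (hP : IsLinkage A T X P) (hx : x ∈ X) (hux : u ∈ P x) (hu : u ∉ T) :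
    ∃ v, [u, v] <:+: P x := by
  obtain ⟨-, -, -, t, ht, hlast⟩ := hP.1 x hx
  exact List.exists_pair_infix_of_mem hux (by rw [hlast]; rintro ⟨⟩; exact hu ht)

theorem left_eq_of_pair_infix (hP : IsLinkage A T X P) (hx : x ∈ X) (hy : y ∈ X)
    (h₁ : [u, v] <:+: P x) (h₂ : [w, v] <:+: P y) : u = w := by
  obtain rfl := hP.eq_of_mem_of_mem hx hy (h₁.subset (by simp : v ∈ [u, v]))
    (h₂.subset (by simp : v ∈ [w, v]))
  exact (hP.1 x hx).2.1.left_eq_of_pair_infix h₁ h₂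

theorem notMem_of_pair_infix (hP : IsLinkage A T X P) (hx : x ∈ X) (h : [u, v] <:+: P x) :
    v ∉ X := fun hv => by
  obtain rfl := hP.eq_of_mem_of_mem hv hx (hP.mem_self hv) (h.subset (by simp : v ∈ [u, v]))
  exact (hP.1 v hx).2.1.not_pair_infix_of_head?_eq (hP.1 v hx).1 h

theorem rel_of_pair_infix (hP : IsLinkage A T X P) (hx : x ∈ X) (h : [u, v] <:+: P x) : A u v :=
  List.isChain_pair.1 ((hP.1 x hx).2.2.1.infix h)

end IsLinkage

/-- The bipartite graph of Ingleton and Piff. -/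
def linkingGraph (A : V → V → Prop) (T : Set V) (u : {v // v ∉ T}) (v : V) : Prop :=
  v = u ∨ A u v

def IsMatchingInto {R C : Type*} (E : R → C → Prop) (Y : Set C) (g : R → C) : Prop :=
  Injective g ∧ (∀ r, g r ∈ Y) ∧ ∀ r, E r (g r)

theorem Linked.exists_isMatchingInto (h : Linked A T X) :
    ∃ g, IsMatchingInto (linkingGraph A T) Xᶜ g := by
  obtain ⟨P, hP⟩ : ∃ P, IsLinkage A T X P := h
  have hstep (u : {v // v ∉ T}) : ∃ v, (∃ x ∈ X, [(u : V), v] <:+: P x) ∨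
      ((∀ x ∈ X, (u : V) ∉ P x) ∧ v = u) := by
    by_cases hu : ∃ x ∈ X, (u : V) ∈ P x
    · obtain ⟨x, hx, hux⟩ := hu
      obtain ⟨v, hv⟩ := hP.exists_pair_infix hx hux u.2
      exact ⟨v, .inl ⟨x, hx, hv⟩⟩
    · exact ⟨u, .inr ⟨fun x hx hux => hu ⟨x, hx, hux⟩, rfl⟩⟩
  choose g hg using hstep
  refine ⟨g, fun u u' huu' => ?_, fun u hu => ?_, fun u => ?_⟩
  · rcases hg u with ⟨x, hx, hu⟩ | ⟨hu, hgu⟩ <;> rcases hg u' with ⟨x', hx', hu'⟩ | ⟨hu', hgu'⟩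
    · exact Subtype.ext (hP.left_eq_of_pair_infix hx hx' hu (huu' ▸ hu'))
    · exact (hu' x hx (hu.subset (by simp [huu', hgu']))).elim
    · exact (hu x' hx' (hu'.subset (by simp [← huu', hgu]))).elim
    · exact Subtype.ext (hgu.symm.trans (huu'.trans hgu'))
  · rcases hg u with ⟨x, hx, hux⟩ | ⟨hu', hgu⟩
    · exact hP.notMem_of_pair_infix hx hux hu
    · exact hu' _ hu (hgu ▸ hP.mem_self hu)
  · rcases hg u with ⟨x, hx, hux⟩ | ⟨-, hgu⟩
    · exact .inr (hP.rel_of_pair_infix hx hux)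
    · exact .inl hgu

theorem linked_of_isMatchingInto [Finite V] {g : {v // v ∉ T} → V}
    (hg : IsMatchingInto (linkingGraph A T) Xᶜ g) : Linked A T X := by
  classical
  obtain ⟨hginj, hgX, hgE⟩ := hg
  let f (v : V) : V := if h : v ∈ T then v else g ⟨v, h⟩
  have hf (u : {v // v ∉ T}) : f u = g u := dif_neg u.2
  have hinj : InjOn f Tᶜ := fun v hv w hw h => by
    simpa using hginj ((hf ⟨v, hv⟩).symm.trans (h.trans (hf ⟨w, hw⟩)))
  have hmaps : MapsTo f Tᶜ Xᶜ := fun v hv => hf ⟨v, hv⟩ ▸ hgX _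
  have hn (x : V) : ∃ n, x ∈ X → f^[n] x ∈ T ∧ ∀ k < n, f^[k] x ∉ T := by
    by_cases hx : x ∈ X
    · obtain ⟨n, hn⟩ := exists_first_iterate_notMem hinj hmaps hx
      exact ⟨n, fun _ => ⟨not_not.1 hn.1, hn.2⟩⟩
    · exact ⟨0, fun h => absurd h hx⟩
  choose n hn using hn
  refine ⟨fun x => (List.range (n x + 1)).map (f^[·] x), fun x hx => ⟨?_, ?_, ?_, ?_⟩, ?_⟩
  · simp [List.range_succ_eq_map]
  · refine List.Nodup.map_on (fun i hi j hj h => ?_) List.nodup_range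
    simp only [List.mem_range, Nat.lt_succ_iff] at hi hj
    exact (eq_and_eq_of_iterate_eq hinj hmaps hx hx (fun k hk => (hn x hx).2 k (hk.trans_le hi))
      (fun k hk => (hn x hx).2 k (hk.trans_le hj)) h).2
  · refine (List.isChain_map _).2 ((List.isChain_range_succ _ _).2 fun i hi => ?_)
    have hiT := (hn x hx).2 i hi
    rw [iterate_succ_apply', hf ⟨_, hiT⟩]
    refine (hgE ⟨_, hiT⟩).resolve_left fun h => ?_
    have := eq_and_eq_of_iterate_eq hinj hmaps hx hx (i := i + 1) (j := i)
      (fun k hk => (hn x hx).2 k (by omega)) (fun k hk => (hn x hx).2 k (hk.trans hi))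
      (by rw [iterate_succ_apply', hf ⟨_, hiT⟩, h])
    omega
  · exact ⟨_, (hn x hx).1, by simp [List.range_succ]⟩
  · intro x hx y hy hxy v hvx hvy
    simp only [List.mem_map, List.mem_range, Nat.lt_succ_iff] at hvx hvy
    obtain ⟨i, hi, rfl⟩ := hvx
    obtain ⟨j, hj, h⟩ := hvy
    exact hxy (eq_and_eq_of_iterate_eq hinj hmaps hx hy (fun k hk => (hn x hx).2 k (hk.trans_le hi))
      (fun k hk => (hn y hy).2 k (hk.trans_le hj)) h.symm).1

end Linkage

section Restriction

variable {V : Type*} {A : V → V → Prop} {T W : Set V}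

theorem isLinkage_subtype_iff {X : Set W} {Q : W → List W} {P : V → List V}
    (hQP : ∀ x ∈ X, P x = (Q x).map Subtype.val) :
    IsLinkage (fun u v : W => A u v) (Subtype.val ⁻¹' T) X Q ↔
      IsLinkage A T (Subtype.val '' X) P := by
  simp +contextual only [IsLinkage, Set.forall_mem_image, hQP, List.head?_map, List.getLast?_map,
    List.nodup_map_iff Subtype.val_injective, List.isChain_map, List.mem_map, Ne,
    Subtype.val_injective.eq_iff, Set.mem_preimage, Option.map_eq_some_iff, exists_eq_right,
    forall_exists_index, and_imp, forall_apply_eq_imp_iff₂, not_exists, not_and]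
  grind

theorem Linked.image_val {X : Set W} (h : Linked (fun u v : W => A u v) (Subtype.val ⁻¹' T) X) :
    Linked A T (Subtype.val '' X) := by
  classical
  obtain ⟨Q, hQ⟩ := h
  exact ⟨fun v => if hv : v ∈ W then (Q ⟨v, hv⟩).map Subtype.val else [],
    (isLinkage_subtype_iff fun x _ => dif_pos x.2).1 hQ⟩

theorem IsLinkage.linked_subtype {X : Set W} {P : V → List V}
    (hP : IsLinkage A T (Subtype.val '' X) P) (hPW : ∀ x ∈ X, ∀ v ∈ P x, v ∈ W) :
    Linked (fun u v : W => A u v) (Subtype.val ⁻¹' T) X := by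
  classical
  refine ⟨fun w => if hw : ∀ v ∈ P w, v ∈ W then (P w).attachWith _ hw else [],
    (isLinkage_subtype_iff fun x hx => ?_).2 hP⟩
  rw [dif_pos (hPW x hx), List.attachWith_map_subtype_val]

end Restriction

/-- The digraph can be cut down to the vertices of `e '' N.E` and of one linkage for each
independent set. -/
theorem IsGammoid.exists_fintype {α : Type u} {N : Matroid α} (hN : IsGammoid N)
    (hfin : N.Finite) :
    ∃ (V : Type u) (_ : Fintype V) (A : V → V → Prop) (T : Set V) (e : α → V),
      Set.InjOn e N.E ∧ ∀ I ⊆ N.E, (N.Indep I ↔ Linked A T (e '' I)) := by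
  obtain ⟨V, A, T, e, he, hindep⟩ := hN
  rcases isEmpty_or_nonempty α with hα | ⟨⟨a₀⟩⟩
  · refine ⟨PEmpty, inferInstance, fun _ _ => False, ∅, isEmptyElim, fun a => isEmptyElim a,
      fun I _ => ?_⟩
    rw [Set.eq_empty_of_isEmpty I, Set.image_empty]
    exact iff_of_true N.empty_indep ⟨fun _ => [], by simp, by simp⟩
  choose P hP using fun I : {I // I ⊆ N.E ∧ N.Indep I} => (hindep I.1 I.2.1).1 I.2.2
  let W : Set V := e '' insert a₀ N.E ∪ ⋃ I, ⋃ x ∈ e '' I.1, {v | v ∈ P I x}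
  have hWfin : W.Finite := by
    have : Finite {I // I ⊆ N.E ∧ N.Indep I} :=
      (N.ground_finite.finite_subsets.subset fun I hI => hI.1).to_subtype
    exact ((N.ground_finite.insert a₀).image e).union <| Set.finite_iUnion fun I =>
      ((N.ground_finite.subset I.2.1).image e).biUnion fun x _ => (P I x).finite_toSet
  have heW : ∀ a ∈ insert a₀ N.E, e a ∈ W := fun a ha => .inl ⟨a, ha, rfl⟩
  classical
  let e' (a : α) : W := if h : e a ∈ W then ⟨e a, h⟩ else ⟨e a₀, heW a₀ (.inl rfl)⟩
  have he' : ∀ a ∈ N.E, (e' a : V) = e a := fun a ha => by simp [e', heW a (.inr ha)]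
  have himage : ∀ I ⊆ N.E, Subtype.val '' (e' '' I) = e '' I := fun I hI => by
    rw [Set.image_image]; exact Set.image_congr fun a ha => he' a (hI ha)
  refine ⟨W, hWfin.fintype, fun u v => A u v, Subtype.val ⁻¹' T, e',
    fun a ha b hb h => he ha hb (by rw [← he' a ha, ← he' b hb, h]), fun I hI => ⟨fun hI' => ?_,
    fun h => (hindep I hI).2 (himage I hI ▸ h.image_val)⟩⟩
  have hx : ∀ x ∈ e' '' I, (x : V) ∈ e '' I := fun x hx => himage I hI ▸ ⟨x, hx, rfl⟩
  have hPI : IsLinkage A T (Subtype.val '' (e' '' I)) (P ⟨I, hI, hI'⟩) := by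
    rw [himage I hI]; exact hP ⟨I, hI, hI'⟩
  exact hPI.linked_subtype fun x hx' v hv =>
    .inr (Set.mem_iUnion.2 ⟨⟨I, hI, hI'⟩, Set.mem_biUnion (hx x hx') hv⟩)

theorem Module.Basis.linearIndepOn_mkQ_iff {K M ι : Type*} [Ring K] [AddCommGroup M]
    [Module K M] (b : Module.Basis ι K M) (S : Submodule K M) (X : Set ι) :
    LinearIndepOn K (S.mkQ ∘ b) X ↔ ∀ w ∈ S, ↑(b.repr w).support ⊆ X → w = 0 := by
  have hspan (w : M) : w ∈ Submodule.span K (Set.range (b ∘ Subtype.val : X → M)) ↔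
      ↑(b.repr w).support ⊆ X := by
    rw [Set.range_comp, Subtype.range_coe]; exact b.mem_span_image
  change LinearIndependent K (S.mkQ ∘ (b ∘ Subtype.val : X → M)) ↔ _
  refine ⟨fun h w hw hX => ?_, fun h => ?_⟩
  · exact Submodule.disjoint_def.1 (Submodule.range_ker_disjoint h) w ((hspan w).2 hX)
      (by rwa [Submodule.ker_mkQ])
  · refine (b.linearIndependent.comp _ Subtype.val_injective).map
      (Submodule.disjoint_def.2 fun w hw hS => h w ?_ ((hspan w).1 hw))
    rwa [Submodule.ker_mkQ] at hS

theorem Matrix.linearIndepOn_mkQ_range_vecMulLinear_iff {K R C : Type*} [Field K] [Fintype R]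
    [Finite C] (B : Matrix R C K) (X : Set C) :
    LinearIndepOn K ((LinearMap.range B.vecMulLinear).mkQ ∘ Pi.basisFun K C) X ↔
      ∀ y : R → K, EqOn (y ᵥ* B) 0 Xᶜ → y ᵥ* B = 0 := by
  rw [(Pi.basisFun K C).linearIndepOn_mkQ_iff]
  simp only [LinearMap.mem_range, forall_exists_index, forall_apply_eq_imp_iff,
    vecMulLinear_apply, Finsupp.support_subset_iff, Pi.basisFun_repr]
  rfl

theorem Matrix.exists_perm_forall_ne_zero_of_det_ne_zero {n R : Type*} [Fintype n]
    [DecidableEq n] [CommRing R] {M : Matrix n n R} (h : M.det ≠ 0) :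
    ∃ σ : Equiv.Perm n, ∀ i, M (σ i) i ≠ 0 := by
  contrapose! h
  rw [det_apply]
  refine Finset.sum_eq_zero fun σ _ => ?_
  obtain ⟨i, hi⟩ := h σ
  exact smul_eq_zero_of_right _ (Finset.prod_eq_zero (Finset.mem_univ i) hi)

namespace Matrix

variable {K : Type*} [Field K] {R C : Type*} [Fintype R] [DecidableEq R] {B : Matrix R C K}
  {X : Set C}

theorem exists_injective_isUnit_submatrix [Fintype C] (hB : Injective B.vecMul) :
    ∃ c : R → C, Injective c ∧ IsUnit (B.submatrix id c) := by
  have hspan : Submodule.span K (Set.range B.col) = ⊤ := by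
    refine Submodule.eq_top_of_finrank_eq ?_
    rw [← rank_eq_finrank_span_cols, (vecMul_injective_iff.1 hB).rank_matrix, Module.finrank_pi]
  obtain ⟨κ, a, ha, hsp, hli⟩ := exists_linearIndependent' K B.col
  let σ := (Pi.basisFun K R).indexEquiv (Module.Basis.mk hli (by rw [hsp, hspan]))
  exact ⟨a ∘ σ, ha.comp σ.injective,
    linearIndependent_cols_iff_isUnit.1 (hli.comp σ σ.injective)⟩

theorem exists_injective_forall_ne_zero [Fintype C] (hB : Injective B.vecMul) :
    ∃ g : R → C, Injective g ∧ ∀ r, B r (g r) ≠ 0 := by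
  obtain ⟨c, hc, hunit⟩ := exists_injective_isUnit_submatrix hB
  obtain ⟨σ, hσ⟩ :=
    exists_perm_forall_ne_zero_of_det_ne_zero ((isUnit_iff_isUnit_det _).1 hunit).ne_zero
  exact ⟨c ∘ σ.symm, hc.comp σ.symm.injective, fun r => by simpa using hσ (σ.symm r)⟩

theorem exists_isMatchingInto_compl [Fintype C] {E : R → C → Prop}
    (hBE : ∀ r c, B r c ≠ 0 → E r c) (hX : ∀ y, EqOn (y ᵥ* B) 0 Xᶜ → y = 0) :
    ∃ g, IsMatchingInto E Xᶜ g := by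
  classical
  let M := B.submatrix id (Subtype.val : ↥Xᶜ → C)
  have hM : Injective M.vecMul := by
    rw [← coe_vecMulLinear]
    exact (injective_iff_map_eq_zero M.vecMulLinear).2 fun y hy =>
      hX y fun c hc => congrFun hy ⟨c, hc⟩
  obtain ⟨g, hg, hgB⟩ := exists_injective_forall_ne_zero hM
  exact ⟨Subtype.val ∘ g, Subtype.val_injective.comp hg, fun r => (g r).2,
    fun r => hBE _ _ (hgB r)⟩

theorem eq_zero_of_eqOn_compl_of_isUnit_submatrix {g : R → C}
    (hunit : IsUnit (B.submatrix id g)) (hgX : ∀ r, g r ∉ X) {y : R → K}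
    (hy : EqOn (y ᵥ* B) 0 Xᶜ) : y = 0 :=
  vecMul_injective_iff_isUnit.2 hunit <| by
    show y ᵥ* _ = 0 ᵥ* _
    rw [zero_vecMul]; exact funext fun r => hy (hgX r)

theorem exists_forall_isUnit_submatrix [Infinite K] (E : R → C → Prop) {ι : Type*} [Fintype ι]
    (g : ι → R → C) (hgE : ∀ i r, E r (g i r)) (hg : ∀ i, Injective (g i)) :
    ∃ B : Matrix R C K, (∀ r c, B r c ≠ 0 → E r c) ∧ ∀ i, IsUnit (B.submatrix id (g i)) := by
  classical
  let Bx : Matrix R C (MvPolynomial (R × C) K) :=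
    of fun r c => if E r c then MvPolynomial.X (r, c) else 0
  -- at the indicator of the graph of `g i`, the `i`-th submatrix of `Bx` becomes the identity
  have hdet (i : ι) : (Bx.submatrix id (g i)).det ≠ 0 := by
    intro h0
    have hone : (Bx.submatrix id (g i)).map
        (MvPolynomial.eval fun p => if p.2 = g i p.1 then 1 else 0) = 1 := by
      ext r r'
      by_cases hrr : r = r'
      · subst hrr; simp [Bx, hgE]
      · have : g i r' ≠ g i r := (hg i).ne (Ne.symm hrr)
        simp [Bx, one_apply_ne hrr, apply_ite, this]
    simpa [← RingHom.mapMatrix_apply, ← RingHom.map_det, h0] using congrArg det hone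
  obtain ⟨ξ, hξ⟩ : ∃ ξ, MvPolynomial.eval ξ (∏ i, (Bx.submatrix id (g i)).det) ≠ 0 := by
    by_contra! h
    exact Finset.prod_ne_zero_iff.2 (fun i _ => hdet i)
      (MvPolynomial.funext fun ξ => by simpa using h ξ)
  refine ⟨Bx.map (MvPolynomial.eval ξ), fun r c h => by_contra fun hE => h (by simp [Bx, hE]),
    fun i => ?_⟩
  rw [isUnit_iff_isUnit_det, isUnit_iff_ne_zero, submatrix_map, ← RingHom.mapMatrix_apply,
    ← RingHom.map_det]
  rw [map_prod] at hξ
  exact fun h0 => hξ (Finset.prod_eq_zero (Finset.mem_univ i) h0)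

end Matrix

theorem exists_matrix_linked_iff_linearIndepOn {V : Type*} [Fintype V] (K : Type*) [Field K]
    [Infinite K] (A : V → V → Prop) (T : Set V) [DecidablePred (· ∈ T)] :
    ∃ B : Matrix {v // v ∉ T} V K, ∀ X : Set V, Linked A T X ↔
      LinearIndepOn K ((LinearMap.range B.vecMulLinear).mkQ ∘ Pi.basisFun K V) X := by
  classical
  have hmatch (X : Set V) : ∃ g : {v // v ∉ T} → V, Injective g ∧
      (∀ u, linkingGraph A T u (g u)) ∧ (Linked A T X → ∀ u, g u ∉ X) := by
    by_cases hX : Linked A T X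
    · obtain ⟨g, hinj, hmem, hE⟩ := hX.exists_isMatchingInto
      exact ⟨g, hinj, hE, fun _ => hmem⟩
    · exact ⟨Subtype.val, Subtype.val_injective, fun _ => .inl rfl, fun h => absurd h hX⟩
  choose g hginj hgE hgX using hmatch
  obtain ⟨B, hBE, hunit⟩ :=
    Matrix.exists_forall_isUnit_submatrix (K := K) (linkingGraph A T) g hgE hginj
  refine ⟨B, fun X => ?_⟩
  rw [Matrix.linearIndepOn_mkQ_range_vecMulLinear_iff]
  refine ⟨fun hX y hy => ?_, fun hX => ?_⟩
  · rw [Matrix.eq_zero_of_eqOn_compl_of_isUnit_submatrix (hunit X) (hgX X hX) hy, zero_vecMul]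
  · -- the rows of `B` are independent, as witnessed by the submatrix of any matching
    have hrows : ∀ y, EqOn (y ᵥ* B) 0 Xᶜ → y = 0 := fun y hy =>
      Matrix.eq_zero_of_eqOn_compl_of_isUnit_submatrix (X := ∅) (hunit ∅) (fun _ => id)
        fun c _ => congrFun (hX y hy) c
    obtain ⟨g, hg⟩ := Matrix.exists_isMatchingInto_compl hBE hrows
    exact linked_of_isMatchingInto hg

theorem representableOver_of_linearIndepOn_iff {α : Type u} {N : Matroid α} {F : Type v}
    [Field F] {W : Type (max u v)} [AddCommGroup W] [Module F W] (ψ : α → W)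
    (h : ∀ I ⊆ N.E, N.Indep I ↔ LinearIndepOn F ψ I) : RepresentableOver F N := by
  let ev : W →ₗ[F] Module.Dual F W → F := LinearMap.pi fun f => f
  have hev : Injective ev := LinearMap.ker_eq_bot.1 <| LinearMap.ker_eq_bot'.2 fun w hw =>
    (Module.forall_dual_apply_eq_zero_iff F w).1 fun f => congrFun hw f
  exact ⟨Module.Dual F W, ev ∘ ψ, fun I hI =>
    (h I hI).trans (ev.linearIndepOn_iff_of_injOn hev.injOn).symm⟩

/-- Every gammoid is representable over every infinite field. -/
theorem gammoid_representable_over_infinite_field {α : Type u} (N : Matroid α)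
    (hfin : N.Finite) (hN : IsGammoid N) (F : Type v) [Field F] [Infinite F] :
    RepresentableOver F N := by
  classical
  obtain ⟨V, _, A, T, e, he, hindep⟩ := hN.exists_fintype hfin
  obtain ⟨B, hB⟩ := exists_matrix_linked_iff_linearIndepOn F A T
  refine representableOver_of_linearIndepOn_iff
    (((LinearMap.range B.vecMulLinear).mkQ ∘ Pi.basisFun F V) ∘ e) fun I hI => ?_
  rw [hindep I hI, hB]
  exact ⟨fun h => h.comp_of_image (he.mono hI), LinearIndepOn.image_of_comp e _⟩
end

section
/- Let G be a directed graph, let S and T be sets of vertices of G, and let N be the gammoid L(G,S,T). If t is a vertex in S ∩ T, then N/t = L(G−t, S−t, T−t), where G−t denotes the directed graph obtained from G by deleting the vertex t. -/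
/-!
Common definitions: digraphs, linkings, gammoids, minors, isomorphism.
-/

universe u v

open Set

/-!
Contracting the nonloop `t` turns independence of `I` into independence of `I ∪ {t}`. In a
linkage of `I ∪ {t}` the path from `t` contains `t`, so all other paths avoid `t` and form a
linkage of `I` to `T - t` in `G - t`; conversely, the trivial path `[t]` can be added to any
linkage of `I` in `G - t`.
-/

namespace List

variable {α : Type*} {R : α → α → Prop} {t : α} {l : List α}

theorem IsChain.and_ne_of_not_mem (h : l.IsChain R) (ht : t ∉ l) :
    l.IsChain (fun v w => R v w ∧ v ≠ t ∧ w ≠ t) :=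
  h.imp_of_mem_imp fun _ _ hv hw hvw =>
    ⟨hvw, ne_of_mem_of_not_mem hv ht, ne_of_mem_of_not_mem hw ht⟩

theorem not_mem_of_isChain_and_ne {x : α}
    (h : l.IsChain (fun v w => R v w ∧ v ≠ t ∧ w ≠ t)) (hx : l.head? = some x) (hxt : x ≠ t) :
    t ∉ l := by
  obtain ⟨l, rfl⟩ := head?_eq_some_iff.mp hx
  rintro (_ | ⟨_, ht⟩)
  · exact hxt rfl
  · exact h.cons_induction (· ≠ t) l (fun _ _ hvw _ => hvw.2.2) hxt t ht rfl

end List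

theorem Matroid.con_eq_contract {α : Type*} (M : Matroid α) (C : Set α) :
    M.con C = M.contract C :=
  rfl

section Linked

variable {V : Type*} {A : V → V → Prop} {T X : Set V} {t : V}

theorem linked_singleton (ht : t ∈ T) : Linked A T {t} :=
  ⟨fun _ => [t], fun x hx => by
      rw [mem_singleton_iff.mp hx]
      exact ⟨rfl, List.nodup_singleton t, List.isChain_singleton t, t, ht, rfl⟩,
    fun _ hx _ hy hxy => absurd (hx.trans hy.symm) hxy⟩

theorem Linked.of_insert (h : Linked A T (insert t X)) (htX : t ∉ X) :
    Linked (fun v w => A v w ∧ v ≠ t ∧ w ≠ t) (T \ {t}) X := by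
  obtain ⟨P, hP, hdisj⟩ := h
  have havoid : ∀ x ∈ X, t ∉ P x := fun x hx =>
    hdisj t (mem_insert t X) x (mem_insert_of_mem t hx) (ne_of_mem_of_not_mem hx htX).symm t
      (List.mem_of_mem_head? (hP t (mem_insert t X)).1)
  refine ⟨P, fun x hx => ?_,
    fun x hx y hy => hdisj x (mem_insert_of_mem t hx) y (mem_insert_of_mem t hy)⟩
  obtain ⟨hhead, hnodup, hchain, s, hsT, hlast⟩ := hP x (mem_insert_of_mem t hx)
  have hst : s ≠ t := ne_of_mem_of_not_mem (List.mem_of_getLast? hlast) (havoid x hx)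
  exact ⟨hhead, hnodup, hchain.and_ne_of_not_mem (havoid x hx), s, ⟨hsT, hst⟩, hlast⟩

theorem Linked.insert (h : Linked (fun v w => A v w ∧ v ≠ t ∧ w ≠ t) (T \ {t}) X)
    (htT : t ∈ T) (htX : t ∉ X) : Linked A T (insert t X) := by
  classical
  obtain ⟨P, hP, hdisj⟩ := h
  have hne : ∀ x ∈ X, x ≠ t := fun x hx => ne_of_mem_of_not_mem hx htX
  have havoid : ∀ x ∈ X, ∀ v ∈ P x, v ≠ t := fun x hx v hv =>
    ne_of_mem_of_not_mem hv <|
      List.not_mem_of_isChain_and_ne (hP x hx).2.2.1 (hP x hx).1 (hne x hx)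
  refine ⟨Function.update P t [t], ?_, ?_⟩
  · rintro x (hx | hx)
    · rw [hx, Function.update_self]
      exact ⟨rfl, List.nodup_singleton t, List.isChain_singleton t, t, htT, rfl⟩
    · obtain ⟨hhead, hnodup, hchain, s, hsT, hlast⟩ := hP x hx
      rw [Function.update_of_ne (hne x hx)]
      exact ⟨hhead, hnodup, hchain.imp fun _ _ hvw => hvw.1, s, hsT.1, hlast⟩
  · rintro x (hx | hx) y (hy | hy) hxy v hv
    · exact absurd (hx.trans hy.symm) hxy
    · rw [hx, Function.update_self, List.mem_singleton] at hv
      rw [Function.update_of_ne (hne y hy)]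
      exact fun hvy => havoid y hy v hvy hv
    · rw [Function.update_of_ne (hne x hx)] at hv
      rw [hy, Function.update_self, List.mem_singleton]
      exact havoid x hx v hv
    · rw [Function.update_of_ne (hne x hx)] at hv
      rw [Function.update_of_ne (hne y hy)]
      exact hdisj x hx y hy hxy v hv

end Linked

theorem con_singleton_linkMatroid_general {V : Type u} (A : V → V → Prop) (S T : Set V)
    (N : Matroid V) (hN : IsLinkMatroid A S T N) (t : V)
    (ht : t ∈ S ∩ T) :
    IsLinkMatroid (fun v w => A v w ∧ v ≠ t ∧ w ≠ t) (S \ {t}) (T \ {t})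
      (N.con {t}) := by
  obtain ⟨hE, hIndep⟩ := hN
  have hnonloop : N.IsNonloop t := Matroid.indep_singleton.mp <|
    (hIndep {t}).mpr ⟨singleton_subset_iff.mpr ht.1, linked_singleton ht.2⟩
  rw [Matroid.con_eq_contract]
  refine ⟨by rw [Matroid.contract_ground, hE], fun I => ?_⟩
  rw [hnonloop.contractElem_indep_iff, hIndep, insert_subset_iff, subset_sdiff,
    disjoint_singleton_right]
  constructor
  · rintro ⟨htI, ⟨-, hIS⟩, hlinked⟩
    exact ⟨⟨hIS, htI⟩, hlinked.of_insert htI⟩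
  · rintro ⟨⟨hIS, htI⟩, hlinked⟩
    exact ⟨htI, ⟨ht.1, hIS⟩, hlinked.insert ht.2 htI⟩

/-- If `N = L(G,S,T)` and `t ∈ S ∩ T`, then `N/t = L(G-t, S-t, T-t)`. -/
theorem con_singleton_linkMatroid {V : Type u} (A : V → V → Prop) (S T : Set V)
    (N : Matroid V) (hfin : N.Finite) (hN : IsLinkMatroid A S T N) (t : V)
    (ht : t ∈ S ∩ T) :
    IsLinkMatroid (fun v w => A v w ∧ v ≠ t ∧ w ≠ t) (S \ {t}) (T \ {t})
      (N.con {t}) :=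
  con_singleton_linkMatroid_general A S T N hN t ht
end

section
/- Let N be a gammoid on the ground set S ∪ T, where S ∩ T = ∅ and T is a basis of N. Then there exists a directed graph G whose vertex set V contains S ∪ T such that N = L(G, S ∪ T, T). -/
/-!
Common definitions: digraphs, linkings, gammoids, minors, isomorphism.
-/

universe u v

open Set

/-!
Split every vertex of a presentation `L(G, E, T₀)` of `N` into an in-copy and an out-copy and
give each element of the ground set its own source, so that vertex-disjoint linkings add and
subtract like flows. Fix a linking `q` of the base `T` and reverse its paths. Adding `q` to a
linking of `I` to `T` in the reversed digraph links a superset of `I` to `T₀`, so `I` is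
independent. Conversely, extend an independent `I` to a base `B₀` and subtract `q` from a
linking of `B₀`: this links `B₀` in the reversed digraph, each path ending in `T` or in `T₀`.
No path from some `b` ends in `T₀`: for `b ∈ T` the path is trivial, as `b` has no arc in the
reversed digraph, and for `b ∉ T` adding it to `q` would link `insert b T`.
-/

namespace Gammoid

section Walks

variable {W : Type*}

def walk (f : W → Option W) : ℕ → W → Option W
  | 0, x => some x
  | n + 1, x => (walk f n x).bind f

@[simp] lemma walk_zero (f : W → Option W) (x : W) : walk f 0 x = some x := rfl

lemma walk_succ_eq_some_iff {f : W → Option W} {n : ℕ} {x v : W} :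
    walk f (n + 1) x = some v ↔ ∃ u, walk f n x = some u ∧ f u = some v :=
  Option.bind_eq_some_iff

lemma walk_succ_of_eq_some {f : W → Option W} {n : ℕ} {x u : W}
    (h : walk f n x = some u) : walk f (n + 1) x = f u := by
  simp [walk, h]

lemma walk_eq_none_of_le {f : W → Option W} {x : W} {n m : ℕ} (hnm : n ≤ m)
    (h : walk f n x = none) : walk f m x = none := by
  induction hnm with
  | refl => exact h
  | step _ ih => simp [walk, ih]

lemma walk_pos_eq_none {f : W → Option W} {x : W} (hx : f x = none) {n : ℕ} (hn : 0 < n) :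
    walk f n x = none :=
  walk_eq_none_of_le hn (by simp [walk, hx])

lemma exists_walk_eq_some_of_le {f : W → Option W} {x v : W} {n k : ℕ} (hk : k ≤ n)
    (h : walk f n x = some v) : ∃ u, walk f k x = some u :=
  Option.ne_none_iff_exists'.1 fun hk' => by simp [walk_eq_none_of_le hk hk'] at h

def PartialInjective (f : W → Option W) : Prop :=
  ∀ ⦃u v w⦄, f u = some w → f v = some w → u = v

lemma PartialInjective.walk_sub_eq_some {f : W → Option W} (hf : PartialInjective f)
    {j k : ℕ} {x y v : W} (hjk : j ≤ k) (hk : walk f k x = some v) (hj : walk f j y = some v) :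
    walk f (k - j) x = some y := by
  induction j generalizing k v with
  | zero => simp_all
  | succ j ih =>
    obtain ⟨u, hju, hfu⟩ := walk_succ_eq_some_iff.1 hj
    obtain ⟨k, rfl⟩ : ∃ k', k = k' + 1 := ⟨k - 1, by omega⟩
    obtain ⟨u', hku', hfu'⟩ := walk_succ_eq_some_iff.1 hk
    rw [hf hfu' hfu] at hku'
    simpa using ih (by omega) hku' hju

lemma PartialInjective.eq_and_eq_of_walk_eq {f : W → Option W} (hf : PartialInjective f)
    {x y u : W} (hx : ∀ w, f w ≠ some x) (hy : ∀ w, f w ≠ some y) {j k : ℕ}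
    (hk : walk f k x = some u) (hj : walk f j y = some u) : x = y ∧ k = j := by
  wlog hjk : j ≤ k generalizing x y j k
  · obtain ⟨hyx, hjk⟩ := this hy hx hj hk (by omega)
    exact ⟨hyx.symm, hjk.symm⟩
  have hb := hf.walk_sub_eq_some hjk hk hj
  cases hkj : k - j with
  | zero =>
    rw [hkj] at hb
    exact ⟨Option.some_injective _ hb, by omega⟩
  | succ m =>
    rw [hkj] at hb
    obtain ⟨w, -, hw⟩ := walk_succ_eq_some_iff.1 hb
    exact absurd hw (hy w)

lemma PartialInjective.exists_walk_terminal {f : W → Option W} (hf : PartialInjective f)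
    (hfin : {u | f u ≠ none}.Finite) {x : W} (hx : ∀ u, f u ≠ some x) :
    ∃ n t, walk f n x = some t ∧ f t = none := by
  -- otherwise the walk would visit infinitely many vertices with a successor, since it never
  -- repeats a vertex: nothing steps into `x`, and steps are injective
  by_contra! hcon
  have hdef : ∀ n, ∃ u, walk f n x = some u ∧ f u ≠ none := by
    intro n
    induction n with
    | zero => exact ⟨x, rfl, hcon 0 x rfl⟩
    | succ n ih =>
      obtain ⟨u, hu, hfu⟩ := ih
      obtain ⟨v, hv⟩ := Option.ne_none_iff_exists'.1 hfu
      have hnv : walk f (n + 1) x = some v := by rw [walk_succ_of_eq_some hu, hv]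
      exact ⟨v, hnv, hcon _ _ hnv⟩
  choose g hg hg' using hdef
  have hginj : Function.Injective g := fun a b hab =>
    (hf.eq_and_eq_of_walk_eq hx hx (hg a) (hab ▸ hg b)).2
  exact Set.infinite_of_injective_forall_mem hginj hg' hfin

end Walks


section LinkingFunctions

variable {W : Type*} {A : W → W → Prop} {T X : Set W} {f : W → Option W}

/-- `f` encodes a linking of `X` to `T` along `A`: the walk from each `x ∈ X` follows arcs
and stops in `T`. Injectivity and the absence of steps into `X` make the walks disjoint. -/
structure IsLinkingFn (A : W → W → Prop) (T X : Set W) (f : W → Option W) : Prop where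
  adj : ∀ ⦃u v⦄, f u = some v → A u v
  inj : PartialInjective f
  not_succ : ∀ x ∈ X, ∀ u, f u ≠ some x
  reaches : ∀ x ∈ X, ∃ n t, walk f n x = some t ∧ f t = none ∧ t ∈ T

structure IsTight (X : Set W) (f : W → Option W) : Prop where
  reached : ∀ u, f u ≠ none → ∃ x ∈ X, ∃ k, walk f k x = some u
  finite : {u | f u ≠ none}.Finite

namespace IsLinkingFn

lemma mono {X' T' : Set W} (hf : IsLinkingFn A T X f) (hX : X' ⊆ X) (hT : T ⊆ T') :
    IsLinkingFn A T' X' f where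
  adj := hf.adj
  inj := hf.inj
  not_succ x hx := hf.not_succ x (hX hx)
  reaches x hx := by
    obtain ⟨n, t, hn, ht, htT⟩ := hf.reaches x (hX hx)
    exact ⟨n, t, hn, ht, hT htT⟩

lemma ne_none (hf : IsLinkingFn A T X f) {x : W} (hx : x ∈ X) (hxT : x ∉ T) : f x ≠ none := by
  intro h0
  obtain ⟨n, t, hn, -, htT⟩ := hf.reaches x hx
  rcases Nat.eq_zero_or_pos n with rfl | hpos
  · exact hxT (Option.some_injective _ hn ▸ htT)
  · simp [walk_pos_eq_none h0 hpos] at hn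

lemma of_terminal (adj : ∀ ⦃u v⦄, f u = some v → A u v) (inj : PartialInjective f)
    (not_succ : ∀ x ∈ X, ∀ u, f u ≠ some x) (hfin : {u | f u ≠ none}.Finite)
    (hterm : ∀ u, f u = none → (u ∈ X ∨ ∃ w, f w = some u) → u ∈ T) :
    IsLinkingFn A T X f where
  adj := adj
  inj := inj
  not_succ := not_succ
  reaches x hx := by
    obtain ⟨n, t, hn, ht⟩ := inj.exists_walk_terminal hfin (not_succ x hx)
    refine ⟨n, t, hn, ht, hterm t ht ?_⟩
    cases n with
    | zero => exact .inl (Option.some_injective _ hn ▸ hx)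
    | succ n =>
      obtain ⟨w, -, hw⟩ := walk_succ_eq_some_iff.1 hn
      exact .inr ⟨w, hw⟩

lemma single (hf : IsLinkingFn A T X f) {x t : W} {n : ℕ} (hx : x ∈ X)
    (hn : walk f n x = some t) (ht : f t = none) : IsLinkingFn A {t} {x} f where
  adj := hf.adj
  inj := hf.inj
  not_succ y hy := by rw [Set.mem_singleton_iff.1 hy]; exact hf.not_succ x hx
  reaches y hy := by rw [Set.mem_singleton_iff.1 hy]; exact ⟨n, t, hn, ht, rfl⟩

lemma succ_ne_none_or_mem (hf : IsLinkingFn A T X f) (ht : IsTight X f) {w u : W}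
    (h : f w = some u) : f u ≠ none ∨ u ∈ T := by
  obtain ⟨x, hx, k, hk⟩ := ht.reached w (by simp [h])
  have hk1 : walk f (k + 1) x = some u := by rw [walk_succ_of_eq_some hk, h]
  obtain ⟨n, t, hnt, hft, htT⟩ := hf.reaches x hx
  by_contra! hcon
  obtain hlt | rfl | hgt := lt_trichotomy (k + 1) n
  · have h2 : walk f (k + 2) x = none := by rw [walk_succ_of_eq_some hk1, hcon.1]
    simp [walk_eq_none_of_le (show k + 2 ≤ n by omega) h2] at hnt
  · exact hcon.2 (Option.some_injective _ (hk1.symm.trans hnt) ▸ htT)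
  · have h1 : walk f (n + 1) x = none := by rw [walk_succ_of_eq_some hnt, hft]
    simp [walk_eq_none_of_le (show n + 1 ≤ k + 1 by omega) h1] at hk1

lemma linked (hf : IsLinkingFn A T X f) : Linked A T X := by
  choose! n t hn ht htT using hf.reaches
  set g : W → ℕ → W := fun x k => (walk f k x).getD x
  have hg : ∀ x ∈ X, ∀ k ≤ n x, walk f k x = some (g x k) := by
    intro x hx k hk
    obtain ⟨u, hu⟩ := exists_walk_eq_some_of_le hk (hn x hx)
    simp [g, hu]
  have hdisj : ∀ x ∈ X, ∀ y ∈ X, ∀ k ≤ n x, ∀ j ≤ n y, g x k = g y j → x = y ∧ k = j :=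
    fun x hx y hy k hk j hj hkj => hf.inj.eq_and_eq_of_walk_eq (hf.not_succ x hx)
      (hf.not_succ y hy) (hg x hx k hk) (hkj ▸ hg y hy j hj)
  refine ⟨fun x => (List.range (n x + 1)).map (g x), fun x hx => ⟨?_, ?_, ?_, t x, htT x hx, ?_⟩,
    fun x hx y hy hxy v hvx hvy => ?_⟩
  · simp [List.range_succ_eq_map, g]
  · refine List.Nodup.map_on (fun k hk j hj hkj => ?_) List.nodup_range
    simp only [List.mem_range] at hk hj
    exact (hdisj x hx x hx k (by omega) j (by omega) hkj).2
  · show List.IsChain A _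
    rw [List.isChain_map, List.isChain_range_succ]
    intro m hm
    have := walk_succ_of_eq_some (hg x hx m hm.le)
    rw [hg x hx (m + 1) hm] at this
    exact hf.adj this.symm
  · have := hg x hx (n x) le_rfl
    rw [hn x hx] at this
    simp [List.getLast?_eq_getElem?, ← Option.some_injective _ this]
  · simp only [List.mem_map, List.mem_range] at hvx hvy
    obtain ⟨k, hk, rfl⟩ := hvx
    obtain ⟨j, hj, hkj⟩ := hvy
    exact hxy (hdisj x hx y hy k (by omega) j (by omega) hkj.symm).1

end IsLinkingFn

namespace IsTight

lemma mem_or_exists_pred (ht : IsTight X f) {u : W} (hu : f u ≠ none) :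
    u ∈ X ∨ ∃ v, f v = some u := by
  obtain ⟨x, hx, k, hk⟩ := ht.reached u hu
  cases k with
  | zero => exact .inl (Option.some_injective _ hk ▸ hx)
  | succ k =>
    obtain ⟨v, -, hv⟩ := walk_succ_eq_some_iff.1 hk
    exact .inr ⟨v, hv⟩

lemma sdiff (ht : IsTight X f) {Z : Set W} (hZ : ∀ z ∈ Z, f z = none) : IsTight (X \ Z) f where
  reached u hu := by
    obtain ⟨x, hx, k, hk⟩ := ht.reached u hu
    refine ⟨x, ⟨hx, fun hxZ => ?_⟩, k, hk⟩
    rcases Nat.eq_zero_or_pos k with rfl | hpos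
    · exact hu (Option.some_injective _ hk ▸ hZ x hxZ)
    · simp [walk_pos_eq_none (hZ x hxZ) hpos] at hk
  finite := ht.finite

end IsTight

end LinkingFunctions


section Paths

variable {W : Type*} {A : W → W → Prop} {T X : Set W}

lemma _root_.Linked.mono {X' : Set W} (h : Linked A T X) (hX : X' ⊆ X) : Linked A T X' := by
  obtain ⟨P, hP, hdisj⟩ := h
  exact ⟨P, fun x hx => hP x (hX hx), fun x hx y hy => hdisj x (hX hx) y (hX hy)⟩

def IsLinkPath (A : W → W → Prop) (T : Set W) (x : W) (l : List W) : Prop :=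
  l.head? = some x ∧ l.Nodup ∧ l.IsChain A ∧ ∃ t ∈ T, l.getLast? = some t

lemma linked_image_iff {α : Type*} {ι : α → W} {I : Set α} (hι : Set.InjOn ι I) :
    Linked A T (ι '' I) ↔ ∃ Q : α → List W, (∀ a ∈ I, IsLinkPath A T (ι a) (Q a)) ∧
      ∀ a ∈ I, ∀ b ∈ I, a ≠ b → ∀ v ∈ Q a, v ∉ Q b := by
  classical
  constructor
  · rintro ⟨P, hP, hdisj⟩
    exact ⟨fun a => P (ι a), fun a ha => hP _ ⟨a, ha, rfl⟩, fun a ha b hb hab =>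
      hdisj _ ⟨a, ha, rfl⟩ _ ⟨b, hb, rfl⟩ fun h => hab (hι ha hb h)⟩
  · rintro ⟨Q, hQ, hdisj⟩
    refine ⟨fun x => if hx : x ∈ ι '' I then Q hx.choose else [], fun x hx => ?_,
      fun x hx y hy hxy => ?_⟩
    · dsimp only
      rw [dif_pos hx]
      have h := hQ _ hx.choose_spec.1
      rw [hx.choose_spec.2] at h
      exact h
    · simp only [dif_pos hx, dif_pos hy]
      exact hdisj _ hx.choose_spec.1 _ hy.choose_spec.1
        fun h => hxy (by rw [← hx.choose_spec.2, h, hy.choose_spec.2])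

open Classical in
noncomputable def nextIn (l : List W) (u : W) : Option W := l[l.idxOf u + 1]?

lemma nextIn_eq_some {l : List W} {u w : W} (h : nextIn l u = some w) :
    ∃ i, ∃ hi : i + 1 < l.length, l[i] = u ∧ l[i + 1] = w := by
  classical
  obtain ⟨hi, hw⟩ := List.getElem?_eq_some_iff.1 h
  exact ⟨_, hi, List.getElem_idxOf (by omega), hw⟩

lemma nextIn_getElem {l : List W} (hl : l.Nodup) {i : ℕ} (hi : i < l.length) :
    nextIn l l[i] = l[i + 1]? := by
  classical
  simp [nextIn, hl.idxOf_getElem]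

open Classical in
noncomputable def succAlong (X : Set W) (P : W → List W) (u : W) : Option W :=
  if h : ∃ x ∈ X, u ∈ P x then nextIn (P h.choose) u else none

variable {P : W → List W}

lemma succAlong_of_mem (hdisj : ∀ x ∈ X, ∀ y ∈ X, x ≠ y → ∀ v ∈ P x, v ∉ P y) {u x : W}
    (hx : x ∈ X) (hu : u ∈ P x) : succAlong X P u = nextIn (P x) u := by
  have hex : ∃ x ∈ X, u ∈ P x := ⟨x, hx, hu⟩
  obtain rfl : hex.choose = x := by_contra fun hne =>
    hdisj _ hex.choose_spec.1 x hx hne u hex.choose_spec.2 hu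
  simp [succAlong, dif_pos hex]

lemma succAlong_eq_some {u v : W} (h : succAlong X P u = some v) :
    ∃ x ∈ X, ∃ i, ∃ hi : i + 1 < (P x).length, (P x)[i] = u ∧ (P x)[i + 1] = v := by
  unfold succAlong at h
  split_ifs at h with hex
  exact ⟨_, hex.choose_spec.1, nextIn_eq_some h⟩

lemma walk_succAlong (hP : ∀ x ∈ X, IsLinkPath A T x (P x))
    (hdisj : ∀ x ∈ X, ∀ y ∈ X, x ≠ y → ∀ v ∈ P x, v ∉ P y) {x : W} (hx : x ∈ X) (k : ℕ) :
    walk (succAlong X P) k x = (P x)[k]? := by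
  induction k with
  | zero => simpa [List.head?_eq_getElem?] using (hP x hx).1.symm
  | succ k ih =>
    by_cases hk : k < (P x).length
    · rw [walk_succ_of_eq_some (ih.trans (List.getElem?_eq_getElem hk)),
        succAlong_of_mem hdisj hx (List.getElem_mem hk), nextIn_getElem (hP x hx).2.1]
    · simp [walk, ih, List.getElem?_eq_none (by omega : (P x).length ≤ k),
        List.getElem?_eq_none (by omega : (P x).length ≤ k + 1)]

lemma isLinkingFn_succAlong (hP : ∀ x ∈ X, IsLinkPath A T x (P x))
    (hdisj : ∀ x ∈ X, ∀ y ∈ X, x ≠ y → ∀ v ∈ P x, v ∉ P y) :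
    IsLinkingFn A T X (succAlong X P) := by
  have huniq : ∀ {u x y}, x ∈ X → y ∈ X → u ∈ P x → u ∈ P y → x = y :=
    fun hx hy hux huy => by_contra fun hne => hdisj _ hx _ hy hne _ hux huy
  refine ⟨fun u v huv => ?_, fun u v w hu hv => ?_, fun x hx u hu => ?_, fun x hx => ?_⟩
  · obtain ⟨x, hx, i, hi, rfl, rfl⟩ := succAlong_eq_some huv
    exact (hP x hx).2.2.1.getElem i hi
  · obtain ⟨x, hx, i, hi, rfl, hw⟩ := succAlong_eq_some hu
    obtain ⟨y, hy, j, hj, rfl, hw'⟩ := succAlong_eq_some hv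
    obtain rfl := huniq hx hy (hw ▸ List.getElem_mem hi) (hw' ▸ List.getElem_mem hj)
    obtain rfl : i = j := by simpa using ((hP x hx).2.1.getElem_inj_iff).1 (hw.trans hw'.symm)
    rfl
  · obtain ⟨y, hy, i, hi, -, hx'⟩ := succAlong_eq_some hu
    have hx0 : (P x)[0]? = some x := by simpa [List.head?_eq_getElem?] using (hP x hx).1
    obtain rfl := huniq hy hx (hx' ▸ List.getElem_mem hi) (List.mem_of_getElem? hx0)
    obtain ⟨h0, hx0⟩ := List.getElem?_eq_some_iff.1 hx0
    have := ((hP y hy).2.1.getElem_inj_iff).1 (hx'.trans hx0.symm)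
    omega
  · obtain ⟨t, htT, hlast⟩ := (hP x hx).2.2.2
    refine ⟨(P x).length - 1, t, ?_, ?_, htT⟩
    · rw [walk_succAlong hP hdisj hx, ← List.getLast?_eq_getElem?, hlast]
    obtain ⟨hlen, rfl⟩ := List.getElem?_eq_some_iff.1 (List.getLast?_eq_getElem? ▸ hlast)
    rw [succAlong_of_mem hdisj hx (List.getElem_mem hlen), nextIn_getElem (hP x hx).2.1]
    exact List.getElem?_eq_none (by omega)

lemma isTight_succAlong (hX : X.Finite) (hP : ∀ x ∈ X, IsLinkPath A T x (P x))
    (hdisj : ∀ x ∈ X, ∀ y ∈ X, x ≠ y → ∀ v ∈ P x, v ∉ P y) : IsTight X (succAlong X P) where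
  reached u hu := by
    obtain ⟨v, hv⟩ := Option.ne_none_iff_exists'.1 hu
    obtain ⟨x, hx, i, hi, rfl, -⟩ := succAlong_eq_some hv
    exact ⟨x, hx, i, (walk_succAlong hP hdisj hx i).trans (List.getElem?_eq_getElem _)⟩
  finite := by
    refine (hX.biUnion fun x _ => (P x).finite_toSet).subset fun u hu => ?_
    obtain ⟨v, hv⟩ := Option.ne_none_iff_exists'.1 hu
    obtain ⟨x, hx, i, hi, rfl, -⟩ := succAlong_eq_some hv
    exact Set.mem_biUnion hx (List.getElem_mem _)

lemma _root_.Linked.exists_linkingFn (hX : X.Finite) (h : Linked A T X) :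
    ∃ f, IsLinkingFn A T X f ∧ IsTight X f :=
  let ⟨_, hP, hdisj⟩ := h
  ⟨_, isLinkingFn_succAlong hP hdisj, isTight_succAlong hX hP hdisj⟩

lemma IsLinkingFn.exists_tight {f : W → Option W} (hf : IsLinkingFn A T X f) (hX : X.Finite) :
    ∃ g, IsLinkingFn A T X g ∧ IsTight X g :=
  hf.linked.exists_linkingFn hX

end Paths


section Flows

variable {W : Type*} {A : W → W → Prop} {R T X Y : Set W} {p q : W → Option W}

/-- The shape of a digraph obtained by splitting every vertex into an in-copy and an out-copy
and attaching sources `R` and sinks `T`: every vertex has at most one out-neighbour or at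
most one in-neighbour, so vertex-disjoint linkings add and subtract like flows. -/
structure IsSplit (A : W → W → Prop) (R T : Set W) : Prop where
  disjoint : Disjoint R T
  not_adj_source : ∀ u, ∀ z ∈ R, ¬ A u z
  source_succ_unique : ∀ z ∈ R, ∀ ⦃v w⦄, A z v → A z w → v = w
  not_adj_sink : ∀ t ∈ T, ∀ v, ¬ A t v
  sink_pred_unique : ∀ t ∈ T, ∀ ⦃u v⦄, A u t → A v t → u = v
  succ_or_pred_unique :
    ∀ u, (∀ ⦃v w⦄, A u v → A u w → v = w) ∨ (∀ ⦃v w⦄, A v u → A w u → v = w)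

def residual (A : W → W → Prop) (q : W → Option W) (u v : W) : Prop :=
  (A u v ∧ q u ≠ some v) ∨ q v = some u

namespace IsSplit

lemma notMem_of_mem_source (hA : IsSplit A R T) {z : W} (hz : z ∈ R) : z ∉ T :=
  Set.disjoint_left.1 hA.disjoint hz

lemma succ_notMem_source (hA : IsSplit A R T) (hq : IsLinkingFn A T Y q) {w z : W}
    (h : q w = some z) : z ∉ R :=
  fun hz => hA.not_adj_source w z hz (hq.adj h)

/-- The only arc leaving `y` is the one used by `q`. -/
lemma not_residual (hA : IsSplit A R T) (hq : IsLinkingFn A T Y q) (hYR : Y ⊆ R) {y v : W}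
    (hy : y ∈ Y) : ¬ residual A q y v := by
  rintro (⟨hyv, hqy⟩ | hqv)
  · obtain ⟨z, hz⟩ :=
      Option.ne_none_iff_exists'.1 (hq.ne_none hy (hA.notMem_of_mem_source (hYR hy)))
    exact hqy (hA.source_succ_unique y (hYR hy) hyv (hq.adj hz) ▸ hz)
  · exact hA.succ_notMem_source hq hqv (hYR hy)

end IsSplit

end Flows


section Difference

variable {W : Type*} {A : W → W → Prop} {R T X Y : Set W} {p q : W → Option W}

open Classical in
/-- The difference of the linkings `p` and `q`, living in the residual digraph of `q`: the arcs
of `p` not used by `q`, and the arcs of `q` not used by `p`, reversed. -/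
noncomputable def diffFn (p q : W → Option W) (u : W) : Option W :=
  if ∃ v, p u = some v ∧ q u ≠ some v then p u
  else if h : ∃ v, q v = some u ∧ p v ≠ some u then some h.choose else none

lemma diffFn_eq_some {u v : W} (h : diffFn p q u = some v) :
    (p u = some v ∧ q u ≠ some v) ∨ (q v = some u ∧ p v ≠ some u) := by
  unfold diffFn at h
  split_ifs at h with h1 h2
  · obtain ⟨v', hv', hq'⟩ := h1
    exact .inl ⟨h, (Option.some_injective _ (hv'.symm.trans h)) ▸ hq'⟩
  · exact .inr (Option.some_injective _ h ▸ h2.choose_spec)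

lemma diffFn_eq_none {u : W} (h : diffFn p q u = none) :
    (∀ v, p u = some v → q u = some v) ∧ (∀ v, q v = some u → p v = some u) := by
  unfold diffFn at h
  split_ifs at h with h1 h2
  · obtain ⟨v', hv', -⟩ := h1
    simp [hv'] at h
  · push Not at h1 h2
    exact ⟨h1, h2⟩

/-- Rules out a forward and a reversed arc of `diffFn p q` with a common head. -/
lemma diffFn_mixed (hA : IsSplit A R T) (hYR : Y ⊆ R) (hp : IsLinkingFn A T X p)
    (hpt : IsTight X p) (hq : IsLinkingFn A T Y q) (hqt : IsTight Y q) {w u w' : W}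
    (hpw : p w = some u) (hqw : q w ≠ some u) (hqu : q u = some w') : p u = some w' := by
  have hwu : A w u := hp.adj hpw
  obtain hu | ⟨v, hv⟩ := hqt.mem_or_exists_pred (u := u) (by simp [hqu])
  · exact absurd hwu (hA.not_adj_source w u (hYR hu))
  rcases hA.succ_or_pred_unique u with hout | hin
  · rcases hp.succ_ne_none_or_mem hpt hpw with hpu | huT
    · obtain ⟨z, hz⟩ := Option.ne_none_iff_exists'.1 hpu
      exact hout (hp.adj hz) (hq.adj hqu) ▸ hz
    · exact absurd (hq.adj hqu) (hA.not_adj_sink u huT w')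
  · exact absurd (hin (hq.adj hv) hwu ▸ hv) hqw

lemma diffFn_partialInjective (hA : IsSplit A R T) (hYR : Y ⊆ R) (hp : IsLinkingFn A T X p)
    (hpt : IsTight X p) (hq : IsLinkingFn A T Y q) (hqt : IsTight Y q) :
    PartialInjective (diffFn p q) := by
  intro w₁ w₂ u h₁ h₂
  rcases diffFn_eq_some h₁ with ⟨hp₁, hq₁⟩ | ⟨hq₁, hp₁⟩ <;>
    rcases diffFn_eq_some h₂ with ⟨hp₂, hq₂⟩ | ⟨hq₂, hp₂⟩
  · exact hp.inj hp₁ hp₂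
  · exact absurd (diffFn_mixed hA hYR hp hpt hq hqt hp₁ hq₁ hq₂) hp₂
  · exact absurd (diffFn_mixed hA hYR hp hpt hq hqt hp₂ hq₂ hq₁) hp₁
  · exact Option.some_injective _ (hq₁.symm.trans hq₂)

lemma diffFn_ne_some_of_mem (hA : IsSplit A R T) (hXR : X ⊆ R) (hp : IsLinkingFn A T X p)
    (hq : IsLinkingFn A T Y q) {x : W} (hx : x ∈ X) (u : W) :
    diffFn p q u ≠ some x := by
  intro h
  rcases diffFn_eq_some h with ⟨hpu, -⟩ | ⟨hqx, hpx⟩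
  · exact hp.not_succ x hx u hpu
  · have hxR := hXR hx
    obtain ⟨v, hv⟩ := Option.ne_none_iff_exists'.1 (hp.ne_none hx (hA.notMem_of_mem_source hxR))
    exact hpx (hA.source_succ_unique x hxR (hp.adj hv) (hq.adj hqx) ▸ hv)

lemma diffFn_support_finite (hpt : IsTight X p) (hqt : IsTight Y q) :
    {u | diffFn p q u ≠ none}.Finite := by
  refine (hpt.finite.union (hqt.finite.image fun v => (q v).getD v)).subset fun u hu => ?_
  obtain ⟨v, hv⟩ := Option.ne_none_iff_exists'.1 hu
  rcases diffFn_eq_some hv with ⟨hpu, -⟩ | ⟨hqv, -⟩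
  · exact .inl (by simp [hpu])
  · exact .inr ⟨v, by simp [hqv], by simp [hqv]⟩

lemma diffFn_terminal (hA : IsSplit A R T) (hXR : X ⊆ R) (hp : IsLinkingFn A T X p)
    (hpt : IsTight X p) (hqt : IsTight Y q) {u : W} (hu : diffFn p q u = none)
    (hstart : u ∈ X ∨ ∃ w, diffFn p q w = some u) : u ∈ Y ∪ T := by
  obtain ⟨hpq, hqp⟩ := diffFn_eq_none hu
  cases hqu : q u with
  | none =>
    have hpu : p u = none := Option.eq_none_iff_forall_ne_some.2 fun v hv => by
      simpa [hqu] using hpq v hv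
    rcases hstart with hx | ⟨w, hw⟩
    · exact absurd hpu (hp.ne_none hx (hA.notMem_of_mem_source (hXR hx)))
    rcases diffFn_eq_some hw with ⟨hpw, -⟩ | ⟨hqu', -⟩
    · exact .inr ((hp.succ_ne_none_or_mem hpt hpw).resolve_left (not_not.2 hpu))
    · simp [hqu] at hqu'
  | some z =>
    obtain hu | ⟨v, hv⟩ := hqt.mem_or_exists_pred (u := u) (by simp [hqu])
    · exact .inl hu
    have hpv := hqp v hv
    refine (hp.succ_ne_none_or_mem hpt hpv).elim (fun hpu => ?_) .inr
    obtain ⟨z', hz'⟩ := Option.ne_none_iff_exists'.1 hpu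
    obtain rfl : z' = z := Option.some_injective _ ((hpq z' hz').symm.trans hqu)
    exfalso
    rcases hstart with hx | ⟨w, hw⟩
    · exact hp.not_succ u hx v hpv
    rcases diffFn_eq_some hw with ⟨hpw, hqw⟩ | ⟨hqu', hpu'⟩
    · exact hqw (hp.inj hpw hpv ▸ hv)
    · exact hpu' (Option.some_injective _ (hqu.symm.trans hqu') ▸ hz')

lemma isLinkingFn_diffFn (hA : IsSplit A R T) (hXR : X ⊆ R) (hYR : Y ⊆ R)
    (hp : IsLinkingFn A T X p) (hpt : IsTight X p) (hq : IsLinkingFn A T Y q)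
    (hqt : IsTight Y q) : IsLinkingFn (residual A q) (Y ∪ T) X (diffFn p q) :=
  .of_terminal
    (fun _ _ h => (diffFn_eq_some h).imp (fun h => ⟨hp.adj h.1, h.2⟩) And.left)
    (diffFn_partialInjective hA hYR hp hpt hq hqt)
    (fun _ hx => diffFn_ne_some_of_mem hA hXR hp hq hx)
    (diffFn_support_finite hpt hqt)
    (fun _ hu => diffFn_terminal hA hXR hp hpt hqt hu)

end Difference


section Sum

variable {W : Type*} {A : W → W → Prop} {R T X Y : Set W} {p q : W → Option W}

open Classical in
/-- The sum of a linking `q` and a linking `p` in the residual digraph of `q`: the arcs of `p`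
that do not cancel an arc of `q`, and the arcs of `q` not cancelled by `p`. -/
noncomputable def sumFn (p q : W → Option W) (u : W) : Option W :=
  if ∃ v, p u = some v ∧ q v ≠ some u then p u
  else if ∃ v, q u = some v ∧ p v ≠ some u then q u else none

lemma sumFn_eq_some {u v : W} (h : sumFn p q u = some v) :
    (p u = some v ∧ q v ≠ some u) ∨ (q u = some v ∧ p v ≠ some u) := by
  unfold sumFn at h
  split_ifs at h with h1 h2
  · obtain ⟨v', hv', hq'⟩ := h1
    exact .inl ⟨h, (Option.some_injective _ (hv'.symm.trans h)) ▸ hq'⟩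
  · obtain ⟨v', hv', hp'⟩ := h2
    exact .inr ⟨h, (Option.some_injective _ (hv'.symm.trans h)) ▸ hp'⟩

lemma sumFn_eq_none {u : W} (h : sumFn p q u = none) :
    (∀ v, p u = some v → q v = some u) ∧ (∀ v, q u = some v → p v = some u) := by
  unfold sumFn at h
  split_ifs at h with h1 h2
  · obtain ⟨v', hv', -⟩ := h1
    simp [hv'] at h
  · obtain ⟨v', hv', -⟩ := h2
    simp [hv'] at h
  · push Not at h1 h2
    exact ⟨h1, h2⟩

lemma sumFn_mixed (hA : IsSplit A R T) (hYR : Y ⊆ R) (hq : IsLinkingFn A T Y q)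
    (hqt : IsTight Y q) (hp : IsLinkingFn (residual A q) (Y ∪ T) X p) (hpt : IsTight X p)
    {w₁ w₂ u : W} (hpw : p w₁ = some u) (hqu : q u ≠ some w₁) (hqw : q w₂ = some u)
    (hpu : p u ≠ some w₂) : w₁ = w₂ := by
  have hA₁ : A w₁ u := ((hp.adj hpw).resolve_right hqu).1
  have hA₂ : A w₂ u := hq.adj hqw
  by_cases huT : u ∈ T
  · exact hA.sink_pred_unique u huT hA₁ hA₂
  have huY : u ∉ Y := fun hu => hA.succ_notMem_source hq hqw (hYR hu)
  obtain ⟨z, hz⟩ := Option.ne_none_iff_exists'.1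
    ((hp.succ_ne_none_or_mem hpt hpw).resolve_right (by simp [huY, huT]))
  rcases hp.adj hz with ⟨huz, hquz⟩ | hqz
  · obtain ⟨z', hz'⟩ := Option.ne_none_iff_exists'.1
      ((hq.succ_ne_none_or_mem hqt hqw).resolve_right huT)
    rcases hA.succ_or_pred_unique u with hout | hin
    · exact absurd (hout huz (hq.adj hz') ▸ hz') hquz
    · exact hin hA₁ hA₂
  · exact absurd (hq.inj hqz hqw ▸ hz) hpu

lemma sumFn_partialInjective (hA : IsSplit A R T) (hYR : Y ⊆ R) (hq : IsLinkingFn A T Y q)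
    (hqt : IsTight Y q) (hp : IsLinkingFn (residual A q) (Y ∪ T) X p) (hpt : IsTight X p) :
    PartialInjective (sumFn p q) := by
  intro w₁ w₂ u h₁ h₂
  rcases sumFn_eq_some h₁ with ⟨hp₁, hq₁⟩ | ⟨hq₁, hp₁⟩ <;>
    rcases sumFn_eq_some h₂ with ⟨hp₂, hq₂⟩ | ⟨hq₂, hp₂⟩
  · exact hp.inj hp₁ hp₂
  · exact sumFn_mixed hA hYR hq hqt hp hpt hp₁ hq₁ hq₂ hp₂
  · exact (sumFn_mixed hA hYR hq hqt hp hpt hp₂ hq₂ hq₁ hp₁).symm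
  · exact hq.inj hq₁ hq₂

lemma sumFn_ne_some_of_mem (hA : IsSplit A R T) (hXR : X ⊆ R) (hYR : Y ⊆ R)
    (hq : IsLinkingFn A T Y q) (hp : IsLinkingFn (residual A q) (Y ∪ T) X p) {z : W}
    (hz : z ∈ X ∪ (Y \ {v | ∃ w, p w = some v})) (u : W) : sumFn p q u ≠ some z := by
  intro h
  rcases sumFn_eq_some h with ⟨hpu, -⟩ | ⟨hqu, -⟩
  · rcases hz with hx | hy
    exacts [hp.not_succ z hx u hpu, hy.2 ⟨u, hpu⟩]
  · exact hA.succ_notMem_source hq hqu (hz.elim (fun hx => hXR hx) fun hy => hYR hy.1)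

lemma sumFn_support_finite (hpt : IsTight X p) (hqt : IsTight Y q) :
    {u | sumFn p q u ≠ none}.Finite := by
  refine (hpt.finite.union hqt.finite).subset fun u hu => ?_
  obtain ⟨v, hv⟩ := Option.ne_none_iff_exists'.1 hu
  rcases sumFn_eq_some hv with ⟨hpu, -⟩ | ⟨hqu, -⟩
  · exact .inl (by simp [hpu])
  · exact .inr (by simp [hqu])

lemma sumFn_terminal_of_eq_some (hA : IsSplit A R T) (hXR : X ⊆ R) (hq : IsLinkingFn A T Y q)
    (hqt : IsTight Y q) (hp : IsLinkingFn (residual A q) (Y ∪ T) X p) {u v : W}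
    (hu : sumFn p q u = none) (hpu : p u = some v)
    (hstart : u ∈ X ∪ (Y \ {v | ∃ w, p w = some v}) ∨ ∃ w, sumFn p q w = some u) : u ∈ T := by
  obtain ⟨hpq, hqp⟩ := sumFn_eq_none hu
  have hqv := hpq v hpu
  refine (hq.succ_ne_none_or_mem hqt hqv).resolve_left fun hqu => ?_
  obtain ⟨w, hw⟩ := Option.ne_none_iff_exists'.1 hqu
  have hpw := hqp w hw
  rcases hstart with (hx | hy) | ⟨w', hw'⟩
  · exact hA.succ_notMem_source hq hqv (hXR hx)
  · exact hy.2 ⟨w, hpw⟩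
  rcases sumFn_eq_some hw' with ⟨hpw', hqu'⟩ | ⟨hqw', hpu'⟩
  · exact hqu' (hp.inj hpw' hpw ▸ hw)
  · exact hpu' (hq.inj hqw' hqv ▸ hpu)

lemma sumFn_terminal_of_eq_none (hA : IsSplit A R T) (hXR : X ⊆ R) (hYR : Y ⊆ R)
    (hXY : Disjoint X Y) (hq : IsLinkingFn A T Y q) (hqt : IsTight Y q)
    (hp : IsLinkingFn (residual A q) (Y ∪ T) X p) (hpt : IsTight X p) {u : W}
    (hu : sumFn p q u = none) (hpu : p u = none)
    (hstart : u ∈ X ∪ (Y \ {v | ∃ w, p w = some v}) ∨ ∃ w, sumFn p q w = some u) : u ∈ T := by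
  have hqY : ∀ {y}, y ∈ Y → q y ≠ none := fun hy =>
    hq.ne_none hy (hA.notMem_of_mem_source (hYR hy))
  have hpT : ∀ {w}, p w = some u → u ∈ Y ∪ T := fun hw =>
    (hp.succ_ne_none_or_mem hpt hw).resolve_left (by simp [hpu])
  cases hqu : q u with
  | some w =>
    have hpw := (sumFn_eq_none hu).2 w hqu
    refine (hpT hpw).resolve_left fun hy => ?_
    rcases hstart with (hx | hy') | ⟨w', hw'⟩
    · exact Set.disjoint_left.1 hXY hx hy
    · exact hy'.2 ⟨w, hpw⟩
    rcases sumFn_eq_some hw' with ⟨hpw', hqu'⟩ | ⟨hqw', -⟩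
    · exact hqu' (hp.inj hpw' hpw ▸ hqu)
    · exact hA.succ_notMem_source hq hqw' (hYR hy)
  | none =>
    rcases hstart with (hx | hy) | ⟨w', hw'⟩
    · refine absurd hpu (hp.ne_none hx ?_)
      rintro (hy | ht)
      exacts [Set.disjoint_left.1 hXY hx hy, hA.notMem_of_mem_source (hXR hx) ht]
    · exact absurd hqu (hqY hy.1)
    rcases sumFn_eq_some hw' with ⟨hpw', -⟩ | ⟨hqw', -⟩
    · exact (hpT hpw').resolve_left fun hy => hqY hy hqu
    · exact (hq.succ_ne_none_or_mem hqt hqw').resolve_left (by simp [hqu])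

lemma isLinkingFn_sumFn (hA : IsSplit A R T) (hXR : X ⊆ R) (hYR : Y ⊆ R) (hXY : Disjoint X Y)
    (hq : IsLinkingFn A T Y q) (hqt : IsTight Y q)
    (hp : IsLinkingFn (residual A q) (Y ∪ T) X p) (hpt : IsTight X p) :
    IsLinkingFn A T (X ∪ (Y \ {v | ∃ w, p w = some v})) (sumFn p q) :=
  .of_terminal
    (fun _ _ h => (sumFn_eq_some h).elim (fun h => ((hp.adj h.1).resolve_right h.2).1)
      fun h => hq.adj h.1)
    (sumFn_partialInjective hA hYR hq hqt hp hpt)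
    (fun _ hz => sumFn_ne_some_of_mem hA hXR hYR hq hp hz)
    (sumFn_support_finite hpt hqt)
    fun u hu => match hpu : p u with
      | some _ => sumFn_terminal_of_eq_some hA hXR hq hqt hp hu hpu
      | none => sumFn_terminal_of_eq_none hA hXR hYR hXY hq hqt hp hpt hu hpu

end Sum


section Reversal

variable {α W : Type*} {A : W → W → Prop} {R T X : Set W} {M : Matroid α}
  {ι : α → W} {B I : Set α} {q : W → Option W}

/-- Adding the walk to `q` would link `insert b B`; and `b ∉ B`, as walks from `B` are trivial. -/
lemma residual_walk_end_notMem_sink (hA : IsSplit A R T) (hιR : Set.range ι ⊆ R)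
    (hι : Function.Injective ι) (hMA : ∀ J ⊆ M.E, M.Indep J ↔ Linked A T (ι '' J))
    (hB : M.IsBase B) (hq : IsLinkingFn A T (ι '' B) q) (hqt : IsTight (ι '' B) q)
    {r : W → Option W} (hr : IsLinkingFn (residual A q) (ι '' B ∪ T) X r) {b : α} {t : W}
    {n : ℕ} (hbE : b ∈ M.E) (hb : ι b ∈ X) (hn : walk r n (ι b) = some t) (ht : r t = none)
    (htT : t ∈ T) : False := by
  have hBR : ι '' B ⊆ R := (Set.image_subset_range ι B).trans hιR
  have hbB : b ∉ B := by
    intro hbB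
    have h0 : r (ι b) = none := Option.eq_none_iff_forall_ne_some.2 fun v hv =>
      hA.not_residual hq hBR ⟨b, hbB, rfl⟩ (hr.adj hv)
    rcases Nat.eq_zero_or_pos n with rfl | hpos
    · exact hA.notMem_of_mem_source (hιR ⟨b, rfl⟩) (Option.some_injective _ hn ▸ htT)
    · simp [walk_pos_eq_none h0 hpos] at hn
  obtain ⟨p, hp, hpt⟩ := (hr.single hb hn ht).exists_tight (Set.finite_singleton _)
  have hpB : ∀ w y, p w = some y → y ∉ ι '' B := fun w y hw hy =>
    (hp.succ_ne_none_or_mem hpt hw).elim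
      (fun hpy => hpy (Option.eq_none_iff_forall_ne_some.2 fun v hv =>
        hA.not_residual hq hBR hy (hp.adj hv)))
      (fun hyt => hA.notMem_of_mem_source (hBR hy) (Set.mem_singleton_iff.1 hyt ▸ htT))
  have hlink := (isLinkingFn_sumFn hA (Set.singleton_subset_iff.2 (hιR ⟨b, rfl⟩)) hBR
    (Set.disjoint_singleton_left.2 fun ⟨a, ha, hab⟩ => hbB (hι hab ▸ ha)) hq hqt
    (hp.mono subset_rfl (Set.singleton_subset_iff.2 (.inr htT))) hpt).linked
  have hindep : M.Indep (insert b B) := by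
    refine (hMA _ (Set.insert_subset hbE hB.subset_ground)).2 (hlink.mono ?_)
    rw [Set.image_insert_eq, Set.insert_eq]
    exact Set.union_subset_union_right _ fun y hy => ⟨hy, fun ⟨w, hw⟩ => hpB w y hw hy⟩
  exact hbB (hB.eq_of_subset_indep hindep (Set.subset_insert b B) ▸ Set.mem_insert b B)

lemma linked_residual_of_indep [M.Finite] (hA : IsSplit A R T) (hιR : Set.range ι ⊆ R)
    (hι : Function.Injective ι) (hMA : ∀ J ⊆ M.E, M.Indep J ↔ Linked A T (ι '' J))
    (hB : M.IsBase B) (hq : IsLinkingFn A T (ι '' B) q) (hqt : IsTight (ι '' B) q)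
    (hI : M.Indep I) : Linked (residual A q) (ι '' B) (ι '' I) := by
  have hR : ∀ J : Set α, ι '' J ⊆ R := fun J => (Set.image_subset_range ι J).trans hιR
  obtain ⟨B₀, hB₀, hIB₀⟩ := hI.exists_isBase_superset
  obtain ⟨p, hp, hpt⟩ := ((hMA B₀ hB₀.subset_ground).1 hB₀.indep).exists_linkingFn
    ((M.ground_finite.subset hB₀.subset_ground).image ι)
  have hr := isLinkingFn_diffFn hA (hR B₀) (hR B) hp hpt hq hqt
  refine IsLinkingFn.linked (f := diffFn p q) ⟨hr.adj, hr.inj,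
    fun x hx => hr.not_succ x (Set.image_mono hIB₀ hx), ?_⟩
  rintro _ ⟨a, ha, rfl⟩
  obtain ⟨n, t, hn, ht, htB | htT⟩ := hr.reaches _ ⟨a, hIB₀ ha, rfl⟩
  · exact ⟨n, t, hn, ht, htB⟩
  · exact (residual_walk_end_notMem_sink hA hιR hι hMA hB hq hqt hr
      (hB₀.subset_ground (hIB₀ ha)) ⟨a, hIB₀ ha, rfl⟩ hn ht htT).elim

lemma indep_of_linked_residual [M.Finite] (hA : IsSplit A R T) (hιR : Set.range ι ⊆ R)
    (hMA : ∀ J ⊆ M.E, M.Indep J ↔ Linked A T (ι '' J)) (hq : IsLinkingFn A T (ι '' B) q)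
    (hqt : IsTight (ι '' B) q) (hIE : I ⊆ M.E)
    (hI : Linked (residual A q) (ι '' B) (ι '' I)) : M.Indep I := by
  have hR : ∀ J : Set α, ι '' J ⊆ R := fun J => (Set.image_subset_range ι J).trans hιR
  obtain ⟨p, hp, hpt⟩ := hI.exists_linkingFn ((M.ground_finite.subset hIE).image ι)
  have hpB : ∀ y ∈ ι '' B, p y = none := fun y hy =>
    Option.eq_none_iff_forall_ne_some.2 fun v hv => hA.not_residual hq (hR B) hy (hp.adj hv)
  have hs := isLinkingFn_sumFn hA (Set.sdiff_subset.trans (hR I)) (hR B) Set.disjoint_sdiff_left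
    hq hqt (hp.mono Set.sdiff_subset Set.subset_union_left) (hpt.sdiff hpB)
  refine (hMA I hIE).2 (hs.linked.mono fun x hx => ?_)
  by_cases hxB : x ∈ ι '' B
  · exact .inr ⟨hxB, fun ⟨w, hw⟩ => hp.not_succ x hx w hw⟩
  · exact .inl ⟨hx, hxB⟩

theorem indep_iff_linked_residual [M.Finite] (hA : IsSplit A R T) (hιR : Set.range ι ⊆ R)
    (hι : Function.Injective ι) (hMA : ∀ J ⊆ M.E, M.Indep J ↔ Linked A T (ι '' J))
    (hB : M.IsBase B) (hq : IsLinkingFn A T (ι '' B) q) (hqt : IsTight (ι '' B) q) :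
    M.Indep I ↔ I ⊆ M.E ∧ Linked (residual A q) (ι '' B) (ι '' I) :=
  ⟨fun hI => ⟨hI.subset_ground, linked_residual_of_indep hA hιR hι hMA hB hq hqt hI⟩,
    fun ⟨hIE, hI⟩ => indep_of_linked_residual hA hιR hMA hq hqt hIE hI⟩

end Reversal


section SplitDigraph

/-- The vertices of the split digraph of a presentation: a source for each element of the
ground set, and an in-copy, an out-copy and a sink for each vertex. -/
inductive SplitVert (α V : Type*)
  | src : α → SplitVert α V
  | vin : V → SplitVert α V
  | vout : V → SplitVert α V
  | sink : V → SplitVert α V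

variable {α V : Type*}

namespace SplitVert

def vin? : SplitVert α V → Option V
  | src _ => none
  | vin v => some v
  | vout _ => none
  | sink _ => none

def vertex? : SplitVert α V → Option V
  | src _ => none
  | vin v | vout v | sink v => some v

lemma eq_vin_of_vin?_eq_some {x : SplitVert α V} {v : V} (h : x.vin? = some v) : x = vin v := by
  cases x <;> simp_all [vin?]

lemma src_injective : Function.Injective (src : α → SplitVert α V) :=
  fun _ _ h => by injection h

end SplitVert

open SplitVert

inductive SplitArc (e : α → V) (A : V → V → Prop) (T : Set V) :
    SplitVert α V → SplitVert α V → Prop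
  | src (a : α) : SplitArc e A T (src a) (vin (e a))
  | thru (v : V) : SplitArc e A T (vin v) (vout v)
  | arc {u v : V} : A u v → SplitArc e A T (vout u) (vin v)
  | sink {t : V} : t ∈ T → SplitArc e A T (vout t) (sink t)

variable {e : α → V} {A : V → V → Prop} {T : Set V}

lemma isSplit_splitArc : IsSplit (SplitArc e A T) (Set.range src) (Set.range sink) where
  disjoint := Set.disjoint_left.2 <| by rintro _ ⟨a, rfl⟩ ⟨t, h⟩; cases h
  not_adj_source := by rintro u _ ⟨a, rfl⟩ h; cases h
  source_succ_unique := by rintro _ ⟨a, rfl⟩ v w hv hw; cases hv; cases hw; rfl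
  not_adj_sink := by rintro _ ⟨t, rfl⟩ v h; cases h
  sink_pred_unique := by rintro _ ⟨t, rfl⟩ u v hu hv; cases hu; cases hv; rfl
  succ_or_pred_unique u := by
    cases u with
    | src | vin => exact .inl fun v w hv hw => by cases hv; cases hw; rfl
    | vout | sink => exact .inr fun v w hv hw => by cases hv; cases hw; rfl

def expand : List V → List (SplitVert α V)
  | [] => []
  | v :: l => vin v :: vout v :: expand l

lemma mem_expand {l : List V} {w : SplitVert α V} :
    w ∈ expand l ↔ ∃ v ∈ l, w = vin v ∨ w = vout v := by
  induction l with
  | nil => simp [expand]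
  | cons v l ih => simp [expand, ih, or_assoc]

lemma expand_nodup {l : List V} (hl : l.Nodup) : (expand l : List (SplitVert α V)).Nodup := by
  induction l with
  | nil => simp [expand]
  | cons v l ih =>
    rw [List.nodup_cons] at hl
    simp only [expand, List.nodup_cons, List.mem_cons, mem_expand]
    refine ⟨?_, ?_, ih hl.2⟩ <;> aesop

lemma head?_expand (l : List V) : (expand l : List (SplitVert α V)).head? = l.head?.map vin := by
  cases l <;> rfl

lemma getLast?_expand (l : List V) :
    (expand l : List (SplitVert α V)).getLast? = l.getLast?.map vout := by
  induction l with
  | nil => rfl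
  | cons v l ih => cases l <;> simp_all [expand]

lemma expand_isChain {l : List V} (hl : l.IsChain A) : (expand l).IsChain (SplitArc e A T) := by
  induction l with
  | nil => exact .nil
  | cons v l ih =>
    rw [List.isChain_cons] at hl
    refine .cons_cons (.thru v) (List.isChain_cons.2 ⟨fun w hw => ?_, ih hl.2⟩)
    rw [head?_expand] at hw
    obtain ⟨u, hu, rfl⟩ := Option.map_eq_some_iff.1 hw
    exact .arc (hl.1 u hu)

lemma filterMap_vin?_expand (l : List V) :
    (expand l : List (SplitVert α V)).filterMap vin? = l := by
  induction l with
  | nil => rfl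
  | cons v l ih => exact congrArg (v :: ·) ih

def liftPath (a : α) (m : List V) : List (SplitVert α V) :=
  src a :: (expand m ++ (m.getLast?.map sink).toList)

lemma isLinkPath_liftPath {a : α} {m : List V} (hm : IsLinkPath A T (e a) m) :
    IsLinkPath (SplitArc e A T) (Set.range sink) (src a) (liftPath a m) := by
  obtain ⟨hhead, hnodup, hchain, t, htT, hlast⟩ := hm
  have hlift : liftPath a m = src a :: (expand m ++ [sink t]) := by simp [liftPath, hlast]
  rw [hlift]
  refine ⟨rfl, ?_, ?_, sink t, ⟨t, rfl⟩, by simp [List.getLast?_cons, List.getLast?_append]⟩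
  · refine List.nodup_cons.2 ⟨by simp [mem_expand], ?_⟩
    exact (expand_nodup hnodup).append (List.nodup_singleton _) (by simp [mem_expand])
  · refine List.isChain_cons.2 ⟨by simp [head?_expand, hhead, SplitArc.src], ?_⟩
    refine List.isChain_append.2 ⟨expand_isChain hchain, .singleton _, fun x hx y hy => ?_⟩
    simp only [getLast?_expand, hlast, Option.map_some, Option.mem_def, Option.some.injEq,
      List.head?_cons] at hx hy
    subst hx hy
    exact .sink htT

lemma eq_src_or_vertex?_of_mem_liftPath {a : α} {m : List V} {w : SplitVert α V}
    (hw : w ∈ liftPath a m) : w = src a ∨ ∃ v ∈ m, w.vertex? = some v := by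
  simp only [liftPath, List.mem_cons, List.mem_append, mem_expand, Option.mem_toList,
    Option.map_eq_some_iff] at hw
  rcases hw with rfl | ⟨v, hv, rfl | rfl⟩ | ⟨t, ht, rfl⟩
  · exact .inl rfl
  · exact .inr ⟨v, hv, rfl⟩
  · exact .inr ⟨v, hv, rfl⟩
  · exact .inr ⟨t, List.mem_of_getLast? ht, rfl⟩

lemma eq_expand_of_isChain : ∀ {l : List (SplitVert α V)} {v t : V},
    l.IsChain (SplitArc e A T) → l.head? = some (vin v) → l.getLast? = some (sink t) →
    ∃ m, l = expand m ++ [sink t] ∧ m.head? = some v ∧ m.IsChain A ∧ m.getLast? = some t ∧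
      t ∈ T
  | [], _, _, _, h, _ => by simp at h
  | [_], _, _, _, h, h' => by simp_all
  | [_, _], _, _, hc, h, h' => by
    simp only [List.head?_cons, List.getLast?_cons_cons, List.getLast?_singleton,
      Option.some.injEq] at h h'
    subst h h'
    cases List.isChain_cons_cons.1 hc |>.1
  | _ :: _ :: w :: l, v, t, hc, h, h' => by
    simp only [List.head?_cons, Option.some.injEq] at h
    subst h
    obtain ⟨hxy, hc⟩ := List.isChain_cons_cons.1 hc
    cases hxy
    obtain ⟨hyw, hc⟩ := List.isChain_cons_cons.1 hc
    rw [List.getLast?_cons_cons, List.getLast?_cons_cons] at h'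
    cases hyw with
    | arc hvw =>
      obtain ⟨m, hl, hm, hmc, hml, htT⟩ := eq_expand_of_isChain hc rfl h'
      obtain _ | ⟨u, m⟩ := m
      · simp at hm
      simp only [List.head?_cons, Option.some.injEq] at hm
      subst hm
      exact ⟨v :: u :: m, by rw [hl]; rfl, rfl, .cons_cons hvw hmc, by simpa using hml, htT⟩
    | sink hvT =>
      cases l with
      | nil =>
        obtain rfl : v = t := by simpa using h'
        exact ⟨[v], rfl, rfl, .singleton _, rfl, hvT⟩
      | cons x l => cases (List.isChain_cons_cons.1 hc).1

lemma isLinkPath_filterMap_vin? {a : α} {l : List (SplitVert α V)}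
    (hl : IsLinkPath (SplitArc e A T) (Set.range sink) (src a) l) :
    IsLinkPath A T (e a) (l.filterMap vin?) := by
  obtain ⟨hhead, hnodup, hchain, _, ⟨t, rfl⟩, hlast⟩ := hl
  obtain ⟨l, rfl⟩ : ∃ l', l = src a :: l' := by
    cases l with
    | nil => simp at hhead
    | cons x l => exact ⟨l, by simpa using hhead⟩
  obtain _ | ⟨x, l⟩ := l
  · simp at hlast
  obtain ⟨hax, hc⟩ := List.isChain_cons_cons.1 hchain
  cases hax
  obtain ⟨m, hm, hmh, hmc, hml, htT⟩ :=
    eq_expand_of_isChain hc rfl (by rwa [List.getLast?_cons_cons] at hlast)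
  rw [hm, List.nodup_cons] at hnodup
  have hfm : (src a :: (expand m ++ [sink t])).filterMap vin? = m := by
    simp [List.filterMap_cons, List.filterMap_append, filterMap_vin?_expand, vin?]
  rw [hm, hfm]
  refine ⟨hmh, ?_, hmc, t, htT, hml⟩
  have := hnodup.2.filterMap (f := vin?) fun x y v hx hy =>
    (eq_vin_of_vin?_eq_some hx).trans (eq_vin_of_vin?_eq_some hy).symm
  simpa [List.filterMap_cons, List.filterMap_append, filterMap_vin?_expand, vin?] using this

theorem linked_splitArc_iff {I : Set α} (he : Set.InjOn e I) :
    Linked (SplitArc e A T) (Set.range sink) (src '' I) ↔ Linked A T (e '' I) := by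
  rw [linked_image_iff he, linked_image_iff src_injective.injOn]
  constructor
  · rintro ⟨Q, hQ, hdisj⟩
    refine ⟨fun a => (Q a).filterMap vin?, fun a ha => isLinkPath_filterMap_vin? (hQ a ha),
      fun a ha b hb hab v hva hvb => ?_⟩
    obtain ⟨x, hx, hxv⟩ := List.mem_filterMap.1 hva
    obtain ⟨y, hy, hyv⟩ := List.mem_filterMap.1 hvb
    rw [eq_vin_of_vin?_eq_some hxv] at hx
    rw [eq_vin_of_vin?_eq_some hyv] at hy
    exact hdisj a ha b hb hab _ hx hy
  · rintro ⟨Q, hQ, hdisj⟩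
    refine ⟨fun a => liftPath a (Q a), fun a ha => isLinkPath_liftPath (hQ a ha),
      fun a ha b hb hab w hwa hwb => ?_⟩
    rcases eq_src_or_vertex?_of_mem_liftPath hwa with rfl | ⟨v, hva, hwv⟩ <;>
      rcases eq_src_or_vertex?_of_mem_liftPath hwb with hwb' | ⟨v', hvb, hwv'⟩
    · exact hab (src_injective hwb')
    · simp [vertex?] at hwv'
    · subst hwb'
      simp [vertex?] at hwv
    · obtain rfl : v = v' := Option.some_injective _ (hwv.symm.trans hwv')
      exact hdisj a ha b hb hab v hva hvb

end SplitDigraph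

end Gammoid

theorem gammoid_eq_linkMatroid_basis_target_general {α : Type u} (N : Matroid α)
    (hfin : N.Finite) (hN : IsGammoid N) (S T : Set α) (hE : N.E = S ∪ T)
    (hT : N.IsBase T) :
    ∃ (W : Type u) (ι : α ↪ W) (A : W → W → Prop),
      ∀ I : Set α, N.Indep I ↔ I ⊆ S ∪ T ∧ Linked A (ι '' T) (ι '' I) := by
  open Gammoid SplitVert in
  obtain ⟨V, A, T₀, e, he, hNA⟩ := hN
  have hsplit : ∀ I ⊆ N.E, N.Indep I ↔ Linked (SplitArc e A T₀) (Set.range sink) (src '' I) :=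
    fun I hI => (hNA I hI).trans (linked_splitArc_iff (he.mono hI)).symm
  obtain ⟨q, hq, hqt⟩ := ((hsplit T hT.subset_ground).1 hT.indep).exists_linkingFn
    ((hfin.ground_finite.subset hT.subset_ground).image _)
  refine ⟨SplitVert α V, ⟨src, src_injective⟩, residual (SplitArc e A T₀) q, fun I => ?_⟩
  rw [← hE]
  exact indep_iff_linked_residual isSplit_splitArc subset_rfl src_injective hsplit hT hq hqt

/-- Let `N` be a gammoid on the ground set `S ∪ T` where `S ∩ T = ∅` and `T` is a
base of `N`. Then there is a digraph, on a vertex type into which the ground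
type embeds (so its vertex set contains `S ∪ T`), exhibiting `N` as
`L(G, S ∪ T, T)`. -/
theorem gammoid_eq_linkMatroid_basis_target {α : Type u} (N : Matroid α)
    (hfin : N.Finite) (hN : IsGammoid N) (S T : Set α) (hE : N.E = S ∪ T)
    (hST : Disjoint S T) (hT : N.IsBase T) :
    ∃ (W : Type u) (ι : α ↪ W) (A : W → W → Prop),
      ∀ I : Set α, N.Indep I ↔ I ⊆ S ∪ T ∧ Linked A (ι '' T) (ι '' I) :=
  gammoid_eq_linkMatroid_basis_target_general N hfin hN S T hE hT
end

section
/- Let N be a matroid on ground set S with an element x ∈ S such that x is freely placed in N, x is contained in some circuit of N, and N\x = L(G, S−x, T) for a directed graph G and a basis T of N\x. Let G' be the directed graph obtained from G by adding the new vertex x together with an arc from x to every vertex of T. Then N = L(G', S, T). -/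
/-!
Common definitions: digraphs, linkings, gammoids, minors, isomorphism.
-/

universe u v

open Set

/-! For `x ∉ J`, both `N` and `G'` reduce `insert x J` to some `insert t J` with `t ∈ T \ J`.
In `N`: if `insert x J` is independent, `T` spans `x` (through a circuit containing `x`), so some
`t ∈ T` lies outside the closure of `J`; if `insert x J` is dependent while `J` is independent, the
fundamental circuit of `x` is spanning because `x` is freely placed, so `J` spans `N` and no `t`
can be added. In `G'`: a path from `x` begins with an arc `x → t`, `t ∈ T`, and trading it for the
trivial path at `t` (or back) turns a linking of `insert x J` in `G'` into one of `insert t J`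
in `G`. -/

open Set

section Matroid

variable {α : Type*} {M : Matroid α} {C J T X : Set α} {x : α}

lemma isCircuit_iff_isCircuit : IsCircuit M C ↔ M.IsCircuit C := by
  rw [Matroid.isCircuit_iff_forall_ssubset, IsCircuit, Matroid.Dep]
  tauto

lemma Matroid.IsCircuit.mem_closure_of_isBasis (hC : M.IsCircuit C) (hxC : x ∈ C)
    (hT : M.IsBasis T X) (hCX : C \ {x} ⊆ X) : x ∈ M.closure T := by
  rw [hT.closure_eq_closure]
  exact M.closure_subset_closure hCX (hC.mem_closure_sdiff_singleton_of_mem hxC)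

def Matroid.IsFreelyPlaced (M : Matroid α) (x : α) : Prop :=
  ∀ C, M.IsCircuit C → x ∈ C → M.Spanning C

lemma Matroid.IsFreelyPlaced.closure_eq_ground (hx : M.IsFreelyPlaced x) (hJ : M.Indep J)
    (hxJ : x ∈ M.closure J) (hxJ' : x ∉ J) : M.closure J = M.E := by
  have hspan : M.Spanning (insert x J) :=
    (hx _ (hJ.fundCircuit_isCircuit hxJ hxJ') (M.mem_fundCircuit x J)).superset
      (M.fundCircuit_subset_insert x J)
      (insert_subset (M.closure_subset_ground J hxJ) hJ.subset_ground)
  rw [← M.closure_insert_eq_of_mem_closure hxJ, hspan.closure_eq]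

lemma Matroid.IsFreelyPlaced.insert_indep_iff (hx : M.IsFreelyPlaced x) (hxT : x ∈ M.closure T)
    (hTE : T ⊆ M.E) (hxJ : x ∉ J) :
    M.Indep (insert x J) ↔ ∃ t ∈ T, t ∉ J ∧ M.Indep (insert t J) := by
  constructor
  · intro hxJi
    have hJ : M.Indep J := hxJi.subset (subset_insert x J)
    have hxcl : x ∉ M.closure J := ((hJ.insert_indep_iff_of_notMem hxJ).1 hxJi).2
    obtain ⟨t, htT, htcl⟩ := not_subset.1 fun hTJ =>
      hxcl (M.closure_subset_closure_of_subset_closure hTJ hxT)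
    have htJ : t ∉ J := fun ht => htcl (M.mem_closure_of_mem' ht (hTE htT))
    exact ⟨t, htT, htJ, (hJ.insert_indep_iff_of_notMem htJ).2 ⟨hTE htT, htcl⟩⟩
  · rintro ⟨t, htT, htJ, htJi⟩
    have hJ : M.Indep J := htJi.subset (subset_insert t J)
    have htcl : t ∉ M.closure J := ((hJ.insert_indep_iff_of_notMem htJ).1 htJi).2
    rw [hJ.insert_indep_iff_of_notMem hxJ]
    refine ⟨M.closure_subset_ground T hxT, fun hxcl => htcl ?_⟩
    rw [hx.closure_eq_ground hJ hxcl hxJ]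
    exact hTE htT

end Matroid

section Linking

variable {V : Type*} {A : V → V → Prop} {T X : Set V} {a z : V} {p : List V}

def IsLinkingPath (A : V → V → Prop) (T : Set V) (v : V) (p : List V) : Prop :=
  p.head? = some v ∧ p.Nodup ∧ p.IsChain A ∧ ∃ t ∈ T, p.getLast? = some t

lemma IsLinkingPath.mono {B : V → V → Prop} (hAB : ∀ v w, A v w → B v w) {v : V}
    (hp : IsLinkingPath A T v p) : IsLinkingPath B T v p :=
  ⟨hp.1, hp.2.1, hp.2.2.1.imp hAB, hp.2.2.2⟩

lemma IsLinkingPath.mem_head {v : V} (hp : IsLinkingPath A T v p) : v ∈ p :=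
  List.mem_of_mem_head? hp.1

lemma IsLinkingPath.notMem_of_forall_ne {v : V} (hA : ∀ u w, A u w → w ≠ z) (hv : v ≠ z)
    (hp : IsLinkingPath A T v p) : z ∉ p := fun hz =>
  hp.2.2.1.induction (· ≠ z) p (fun u w huw _ => hA u w huw)
    (fun hne => by rwa [(List.head_eq_iff_head?_eq_some hne).2 hp.1]) z hz rfl

lemma linked_insert_iff (haX : a ∉ X) :
    Linked A T (insert a X) ↔ ∃ p, IsLinkingPath A T a p ∧ ∃ P : V → List V,
      (∀ v ∈ X, IsLinkingPath A T v (P v) ∧ ∀ w ∈ p, w ∉ P v) ∧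
      ∀ u ∈ X, ∀ v ∈ X, u ≠ v → ∀ w ∈ P u, w ∉ P v := by
  classical
  constructor
  · rintro ⟨P, hP, hdisj⟩
    refine ⟨P a, hP a (mem_insert a X), P, fun v hv => ⟨hP v (mem_insert_of_mem a hv), ?_⟩,
      fun u hu v hv => hdisj u (mem_insert_of_mem a hu) v (mem_insert_of_mem a hv)⟩
    exact hdisj a (mem_insert a X) v (mem_insert_of_mem a hv) (ne_of_mem_of_not_mem hv haX).symm
  · rintro ⟨p, hp, P, hP, hdisj⟩
    have hupdate : ∀ v ∈ X, Function.update P a p v = P v := fun v hv =>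
      Function.update_of_ne (ne_of_mem_of_not_mem hv haX) p P
    refine ⟨Function.update P a p, ?_, ?_⟩
    · rintro v (rfl | hv)
      · rwa [Function.update_self]
      · exact hupdate v hv ▸ (hP v hv).1
    · rintro u (rfl | hu) v (rfl | hv) huv w hw
      · exact absurd rfl huv
      · rw [Function.update_self] at hw
        exact hupdate v hv ▸ (hP v hv).2 w hw
      · rw [hupdate u hu] at hw
        rw [Function.update_self]
        exact fun hwp => (hP u hu).2 w hwp hw
      · rw [hupdate u hu] at hw
        exact hupdate v hv ▸ hdisj u hu v hv huv w hw

def adjoinSource (A : V → V → Prop) (z : V) (T : Set V) : V → V → Prop :=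
  fun v w => A v w ∨ (v = z ∧ w ∈ T)

lemma isLinkingPath_adjoinSource_iff (hA : ∀ v w, A v w → v ≠ z ∧ w ≠ z) (hzT : z ∉ T)
    {v : V} (hv : v ≠ z) :
    IsLinkingPath (adjoinSource A z T) T v p ↔ IsLinkingPath A T v p := by
  refine ⟨fun hp => ⟨hp.1, hp.2.1, ?_, hp.2.2.2⟩, IsLinkingPath.mono fun _ _ => Or.inl⟩
  have hzp : z ∉ p := by
    refine hp.notMem_of_forall_ne ?_ hv
    rintro u w (huw | ⟨-, hw⟩) rfl
    exacts [(hA u _ huw).2 rfl, hzT hw]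
  exact hp.2.2.1.imp_of_mem_imp fun u w hu _ huw =>
    huw.resolve_right fun h => hzp (h.1 ▸ hu)

lemma linked_adjoinSource_iff (hA : ∀ v w, A v w → v ≠ z ∧ w ≠ z) (hzT : z ∉ T) (hzX : z ∉ X) :
    Linked (adjoinSource A z T) T X ↔ Linked A T X :=
  exists_congr fun _ => and_congr_left' <| forall₂_congr fun _ hv =>
    isLinkingPath_adjoinSource_iff hA hzT (ne_of_mem_of_not_mem hv hzX)

lemma IsLinkingPath.exists_mem_of_adjoinSource (hA : ∀ v w, A v w → v ≠ z) (hzT : z ∉ T)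
    (hp : IsLinkingPath (adjoinSource A z T) T z p) : ∃ t ∈ T, t ∈ p := by
  obtain ⟨hhead, -, hchain, t, htT, hlast⟩ := hp
  rcases p with _ | ⟨a, _ | ⟨b, r⟩⟩
  · simp at hhead
  · simp_all
  · simp only [List.head?_cons, Option.some.injEq] at hhead
    subst hhead
    obtain ⟨hab | ⟨-, hbT⟩, -⟩ := List.isChain_cons_cons.1 hchain
    · exact absurd rfl (hA a b hab)
    · exact ⟨b, hbT, by simp⟩

lemma linked_adjoinSource_insert_iff (hA : ∀ v w, A v w → v ≠ z ∧ w ≠ z) (hzT : z ∉ T)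
    (hzX : z ∉ X) :
    Linked (adjoinSource A z T) T (insert z X) ↔ ∃ t ∈ T, t ∉ X ∧ Linked A T (insert t X) := by
  rw [linked_insert_iff hzX]
  constructor
  · rintro ⟨p, hp, P, hP, hdisj⟩
    obtain ⟨t, htT, htp⟩ := hp.exists_mem_of_adjoinSource (fun v w h => (hA v w h).1) hzT
    have htX : t ∉ X := fun htX => (hP t htX).2 t htp (hP t htX).1.mem_head
    refine ⟨t, htT, htX, (linked_insert_iff htX).2
      ⟨[t], ⟨rfl, List.nodup_singleton t, List.isChain_singleton t, t, htT, rfl⟩, P,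
        fun v hv => ⟨?_, by simpa using (hP v hv).2 t htp⟩, hdisj⟩⟩
    exact (isLinkingPath_adjoinSource_iff hA hzT (ne_of_mem_of_not_mem hv hzX)).1 (hP v hv).1
  · rintro ⟨t, htT, htX, hlink⟩
    obtain ⟨p, hp, P, hP, hdisj⟩ := (linked_insert_iff htX).1 hlink
    have hzt : z ≠ t := ne_of_mem_of_not_mem htT hzT |>.symm
    refine ⟨[z, t], ⟨rfl, by simp [hzt], by simp [adjoinSource, htT], t, htT, rfl⟩, P,
      fun v hv => ⟨(hP v hv).1.mono fun _ _ => Or.inl, ?_⟩, hdisj⟩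
    simp only [List.mem_cons, List.not_mem_nil, or_false]
    rintro w (rfl | rfl)
    · exact (hP v hv).1.notMem_of_forall_ne (fun u w h => (hA u w h).2)
        (ne_of_mem_of_not_mem hv hzX)
    · exact (hP v hv).2 w hp.mem_head

end Linking

lemma linked_adjoinSource_image_insert_iff {α V : Type*} {A : V → V → Prop} {f : α → V}
    (hf : Function.Injective f) {T J : Set α} {x : α} (hA : ∀ v w, A v w → v ≠ f x ∧ w ≠ f x)
    (hxT : x ∉ T) (hxJ : x ∉ J) :
    Linked (adjoinSource A (f x) (f '' T)) (f '' T) (f '' insert x J) ↔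
      ∃ t ∈ T, t ∉ J ∧ Linked A (f '' T) (f '' insert t J) := by
  rw [image_insert_eq, linked_adjoinSource_insert_iff hA (hf.mem_set_image.not.2 hxT)
    (hf.mem_set_image.not.2 hxJ), exists_mem_image]
  simp_rw [hf.mem_set_image, image_insert_eq]

theorem freely_placed_extension_linkMatroid_general {α : Type u} {W : Type v}
    (N : Matroid α) (S : Set α) (x : α) (hE : N.E = S)
    (hfree : ∀ C : Set α, IsCircuit N C → x ∈ C → N.Spanning C)
    (hcirc : ∃ C : Set α, IsCircuit N C ∧ x ∈ C)
    (ι : α ↪ W) (A : W → W → Prop) (T : Set α)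
    (hT : (N.del {x}).IsBase T)
    (hAx : ∀ v w : W, A v w → v ≠ ι x ∧ w ≠ ι x)
    (hG : ∀ I : Set α, (N.del {x}).Indep I ↔ I ⊆ S \ {x} ∧ Linked A (ι '' T) (ι '' I)) :
    ∀ I : Set α, N.Indep I ↔
      I ⊆ S ∧ Linked (fun v w => A v w ∨ (v = ι x ∧ w ∈ ι '' T)) (ι '' T) (ι '' I) := by
  subst hE
  show ∀ I, N.Indep I ↔ I ⊆ N.E ∧ Linked (adjoinSource A (ι x) (ι '' T)) (ι '' T) (ι '' I)
  have hfree' : N.IsFreelyPlaced x := fun C hC => hfree C (isCircuit_iff_isCircuit.2 hC)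
  obtain ⟨C, hC, hxC⟩ := hcirc
  have hTB : N.IsBasis T (N.E \ {x}) := (Matroid.isBase_restrict_iff sdiff_subset).1 hT
  have hxT : x ∈ N.closure T := (isCircuit_iff_isCircuit.1 hC).mem_closure_of_isBasis hxC hTB
    (sdiff_subset_sdiff_left hC.1)
  have hindep : ∀ J ⊆ N.E \ {x}, N.Indep J ↔ Linked A (ι '' T) (ι '' J) := fun J hJ =>
    calc N.Indep J ↔ N.Indep J ∧ J ⊆ N.E \ {x} := (and_iff_left hJ).symm
      _ ↔ (N.del {x}).Indep J := Matroid.restrict_indep_iff.symm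
      _ ↔ _ := (hG J).trans (and_iff_right hJ)
  intro I
  by_cases hIE : I ⊆ N.E
  swap
  · exact iff_of_false (fun h => hIE h.subset_ground) (fun h => hIE h.1)
  rw [and_iff_right hIE]
  by_cases hxI : x ∈ I
  · obtain ⟨J, hxJ, rfl⟩ : ∃ J, x ∉ J ∧ insert x J = I :=
      ⟨I \ {x}, fun h : x ∈ I \ {x} => h.2 rfl,
        by rw [insert_sdiff_singleton, insert_eq_of_mem hxI]⟩
    have hJ : J ⊆ N.E \ {x} := subset_sdiff_singleton ((subset_insert x J).trans hIE) hxJ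
    rw [hfree'.insert_indep_iff hxT (hTB.subset.trans sdiff_subset) hxJ,
      linked_adjoinSource_image_insert_iff ι.injective hAx (fun h => (hTB.subset h).2 rfl) hxJ]
    exact exists_congr fun t => and_congr_right fun ht =>
      and_congr_right fun _ => hindep _ (insert_subset (hTB.subset ht) hJ)
  · exact (hindep I (subset_sdiff_singleton hIE hxI)).trans
      (linked_adjoinSource_iff hAx (fun h => (hTB.subset (ι.injective.mem_set_image.1 h)).2 rfl)
        (fun h => hxI (ι.injective.mem_set_image.1 h))).symm

/-- Let `x` be freely placed in `N`, contained in some circuit, and suppose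
`N \ x = L(G, S - x, T)` for a digraph `G` (on a vertex type `W` into which the
ground type embeds via `ι`, with `ι x` not incident to any arc of `G`) and a
base `T` of `N \ x`. Adding the vertex `x` together with arcs from `x` to every
vertex of `T` produces a digraph `G'` with `N = L(G', S, T)`. -/
theorem freely_placed_extension_linkMatroid {α : Type u} {W : Type v}
    (N : Matroid α) (hfin : N.Finite) (S : Set α) (x : α) (hE : N.E = S)
    (hx : x ∈ S)
    (hfree : ∀ C : Set α, IsCircuit N C → x ∈ C → N.Spanning C)
    (hcirc : ∃ C : Set α, IsCircuit N C ∧ x ∈ C)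
    (ι : α ↪ W) (A : W → W → Prop) (T : Set α)
    (hT : (N.del {x}).IsBase T)
    (hAx : ∀ v w : W, A v w → v ≠ ι x ∧ w ≠ ι x)
    (hG : ∀ I : Set α, (N.del {x}).Indep I ↔ I ⊆ S \ {x} ∧ Linked A (ι '' T) (ι '' I)) :
    ∀ I : Set α, N.Indep I ↔
      I ⊆ S ∧ Linked (fun v w => A v w ∨ (v = ι x ∧ w ∈ ι '' T)) (ι '' T) (ι '' I) :=
  freely_placed_extension_linkMatroid_general N S x hE hfree hcirc ι A T hT hAx hG
end
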